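/- arXiv:2502.17770 — 3 statements merged into one kernel-verified Lean document; each statement's English description precedes it below -/
import Mathlib

section
/- For any x ∈ ℝ^d written in blocks x = (x₁,…,x_m) with x_i ∈ ℝ^{d̄}, and with x̄ := (1/m)·Σ_{i=1}^m x_i, it holds that max{ ‖Hx‖ , inf_{γ ∈ ℝ^{(m−1)d̄}} ‖∇f₀(x) + Hᵀγ‖ } ≥ (√m/2)·‖(1/m)·Σ_{i=1}^m ∇f_i(x̄)‖. -/
open Real Matrix Finset
open scoped Kronecker

noncomputable section

def Psi (u : ℝ) : ℝ := if u ≤ 0 then 0 else 1 - Real.exp (-u ^ 2)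
def Phi (v : ℝ) : ℝ := 4 * Real.arctan v + 2 * π
def zc {d : ℕ} (z : EuclideanSpace ℝ (Fin d)) (j : ℕ) : ℝ :=
  if h : 1 ≤ j ∧ j - 1 < d then z ⟨j - 1, h.2⟩ else 0
def phi {d : ℕ} (z : EuclideanSpace ℝ (Fin d)) (j : ℕ) : ℝ :=
  if j = 1 then -(Psi 1 * Phi (zc z 1))
  else Psi (-zc z (j - 1)) * Phi (-zc z j) - Psi (zc z (j - 1)) * Phi (zc z j)
def hfun (m i : ℕ) {d : ℕ} (z : EuclideanSpace ℝ (Fin d)) : ℝ :=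
  if i ≤ m / 3 then phi z 1 + 3 * ∑ j ∈ Finset.Icc 1 (d / 2), phi z (2 * j)
  else if i ≤ 2 * m / 3 then phi z 1
  else phi z 1 + 3 * ∑ j ∈ Finset.Icc 1 (d / 2), phi z (2 * j + 1)
def ff (m : ℕ) (Lf ε : ℝ) (i : ℕ) {d : ℕ} (z : EuclideanSpace ℝ (Fin d)) : ℝ :=
  300 * π * ε ^ 2 / (m * Lf) * hfun m i ((Real.sqrt m * Lf / (150 * π * ε)) • z)
def blkN {m d : ℕ} (x : EuclideanSpace ℝ (Fin m × Fin d)) (i : ℕ) :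
    EuclideanSpace ℝ (Fin d) :=
  WithLp.toLp 2 (fun j => if h : 1 ≤ i ∧ i - 1 < m then x (⟨i - 1, h.2⟩, j) else 0)
def f0 (m : ℕ) (Lf ε : ℝ) {d : ℕ} (x : EuclideanSpace ℝ (Fin m × Fin d)) : ℝ :=
  ∑ i ∈ Finset.Icc 1 m, ff m Lf ε i (blkN x i)
def l1norm {ι : Type*} [Fintype ι] (x : ι → ℝ) : ℝ := ∑ i, |x i|
def Jmat (p : ℕ) : Matrix (Fin (p - 1)) (Fin p) ℝ :=
  Matrix.of fun i j => if j.val = i.val then -1 else if j.val = i.val + 1 then 1 else 0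
def Hmat (m d : ℕ) (Lf : ℝ) : Matrix (Fin (m - 1) × Fin d) (Fin m × Fin d) ℝ :=
  ((m : ℝ) * Lf) • (Jmat m ⊗ₖ (1 : Matrix (Fin d) (Fin d) ℝ))
def Mset (m₁ m₂ : ℕ) : Finset ℕ := (Finset.Icc 1 (3 * m₂ - 1)).image (· * m₁)
def JM (m₁ m₂ : ℕ) : Matrix (Fin (3 * m₂ - 1)) (Fin (3 * m₁ * m₂)) ℝ :=
  Matrix.of fun i j =>
    if j.val + 1 = (i.val + 1) * m₁ then -1
    else if j.val = (i.val + 1) * m₁ then 1 else 0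
def Abar (m₁ m₂ d : ℕ) (Lf : ℝ) :
    Matrix (Fin (3 * m₂ - 1) × Fin d) (Fin (3 * m₁ * m₂) × Fin d) ℝ :=
  ((3 * m₁ * m₂ : ℕ) * Lf) • (JM m₁ m₂ ⊗ₖ (1 : Matrix (Fin d) (Fin d) ℝ))
abbrev MCidx (m₁ m₂ : ℕ) := {k : Fin (3 * m₁ * m₂ - 1) // k.val + 1 ∉ Mset m₁ m₂}
def JMC (m₁ m₂ : ℕ) : Matrix (MCidx m₁ m₂) (Fin (3 * m₁ * m₂)) ℝ :=
  Matrix.of fun k j => Jmat (3 * m₁ * m₂) k.val j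
def Amat (m₁ m₂ d : ℕ) (Lf : ℝ) :
    Matrix (MCidx m₁ m₂ × Fin d) (Fin (3 * m₁ * m₂) × Fin d) ℝ :=
  ((3 * m₁ * m₂ : ℕ) * Lf) • (JMC m₁ m₂ ⊗ₖ (1 : Matrix (Fin d) (Fin d) ℝ))
def mvec {ι κ : Type*} [Fintype κ] (M : Matrix ι κ ℝ) (x : EuclideanSpace ℝ κ) :
    EuclideanSpace ℝ ι :=
  WithLp.toLp 2 (fun i => ∑ j, M i j * x j)
def sNorm {ι κ : Type*} [Fintype ι] [Fintype κ] [DecidableEq κ] (M : Matrix ι κ ℝ) : ℝ :=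
  ‖LinearMap.toContinuousLinearMap (Matrix.toEuclideanLin M)‖
def lamMax {ι : Type*} [Fintype ι] [DecidableEq ι] (M : Matrix ι ι ℝ) : ℝ :=
  sSup (spectrum ℝ M)
def lamMinPos {ι : Type*} [Fintype ι] [DecidableEq ι] (M : Matrix ι ι ℝ) : ℝ :=
  sInf (spectrum ℝ M ∩ Set.Ioi 0)
def condNum {ι κ : Type*} [Fintype ι] [DecidableEq ι] [Fintype κ] (M : Matrix ι κ ℝ) : ℝ :=
  Real.sqrt (lamMax (M * Mᵀ) / lamMinPos (M * Mᵀ))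
def gfun (m₁ m₂ d : ℕ) (β : ℝ) (x : EuclideanSpace ℝ (Fin (3 * m₁ * m₂) × Fin d)) : ℝ :=
  β * ∑ i ∈ Mset m₁ m₂, l1norm (fun j => blkN x i j - blkN x (i + 1) j)
def gbar (m₁ m₂ d : ℕ) (Lf β : ℝ)
    (y : EuclideanSpace ℝ (Fin (3 * m₂ - 1) × Fin d)) : ℝ :=
  β / ((3 * m₁ * m₂ : ℕ) * Lf) * l1norm y
def IsProx {E : Type*} [NormedAddCommGroup E] [InnerProductSpace ℝ E]
    (η : ℝ) (ψ : E → ℝ) (x p : E) : Prop :=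
  ∀ y, ψ p + ‖p - x‖ ^ 2 / (2 * η) ≤ ψ y + ‖y - x‖ ^ 2 / (2 * η)
def subdiff {E : Type*} [NormedAddCommGroup E] [InnerProductSpace ℝ E]
    (ψ : E → ℝ) (x : E) : Set E :=
  {v | ∀ y, ψ x + (inner ℝ v (y - x) : ℝ) ≤ ψ y}
def suppSub {d : ℕ} (z : EuclideanSpace ℝ (Fin d)) (k : ℕ) : Prop :=
  ∀ j : Fin d, z j ≠ 0 → j.val + 1 ≤ k

/-- x is an ε̂-stationary point of instance 𝒫. -/
def IsStatP (m₁ m₂ d : ℕ) (Lf ε β εh : ℝ)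
    (x : EuclideanSpace ℝ (Fin (3 * m₁ * m₂) × Fin d)) : Prop :=
  ∃ γ : EuclideanSpace ℝ (MCidx m₁ m₂ × Fin d), ∃ ξ ∈ subdiff (gfun m₁ m₂ d β) x,
    ‖gradient (f0 (3 * m₁ * m₂) Lf ε) x + mvec (Amat m₁ m₂ d Lf)ᵀ γ + ξ‖ ≤ εh ∧
    ‖mvec (Amat m₁ m₂ d Lf) x‖ ≤ εh

/-- (x, y) is an ε̂-stationary point of the splitting reformulation (SP). -/
def IsStatSP (m₁ m₂ d : ℕ) (Lf ε β εh : ℝ)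
    (x : EuclideanSpace ℝ (Fin (3 * m₁ * m₂) × Fin d))
    (y : EuclideanSpace ℝ (Fin (3 * m₂ - 1) × Fin d)) : Prop :=
  ∃ z₁ : EuclideanSpace ℝ (Fin (3 * m₂ - 1) × Fin d),
    ∃ z₂ : EuclideanSpace ℝ (MCidx m₁ m₂ × Fin d),
      Metric.infDist 0 ((· - z₁) '' subdiff (gbar m₁ m₂ d Lf β) y) ≤ εh ∧
      ‖gradient (f0 (3 * m₁ * m₂) Lf ε) x + mvec (Abar m₁ m₂ d Lf)ᵀ z₁ +
        mvec (Amat m₁ m₂ d Lf)ᵀ z₂‖ ≤ εh ∧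
      ‖y - mvec (Abar m₁ m₂ d Lf) x‖ ≤ εh ∧ ‖mvec (Amat m₁ m₂ d Lf) x‖ ≤ εh

/-- The sequence X follows Algorithm Class 1 on instance 𝒫. -/
def FollowsAC1 (m₁ m₂ d : ℕ) (Lf ε β : ℝ)
    (X : ℕ → EuclideanSpace ℝ (Fin (3 * m₁ * m₂) × Fin d)) : Prop :=
  X 0 = 0 ∧ ∀ t, 1 ≤ t → ∃ η : ℝ, 0 < η ∧
    ∃ ξ ∈ Submodule.span ℝ (⋃ s ∈ Set.Iio t,
      ({X s, gradient (f0 (3 * m₁ * m₂) Lf ε) (X s),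
        mvec ((Amat m₁ m₂ d Lf)ᵀ * Amat m₁ m₂ d Lf) (X s)} :
          Set (EuclideanSpace ℝ (Fin (3 * m₁ * m₂) × Fin d)))),
      ∃ p, IsProx η (gfun m₁ m₂ d β) ξ p ∧
        X t ∈ Submodule.span ℝ ({ξ, p} : Set (EuclideanSpace ℝ (Fin (3 * m₁ * m₂) × Fin d)))

/-- The pair of sequences (X, Y) follows Algorithm Class 2 on the splitting
reformulation (SP) of instance 𝒫. -/
def FollowsAC2 (m₁ m₂ d : ℕ) (Lf ε β : ℝ)
    (X : ℕ → EuclideanSpace ℝ (Fin (3 * m₁ * m₂) × Fin d))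
    (Y : ℕ → EuclideanSpace ℝ (Fin (3 * m₂ - 1) × Fin d)) : Prop :=
  X 0 = 0 ∧ Y 0 = 0 ∧ ∀ t, 1 ≤ t →
    (X t ∈ Submodule.span ℝ (⋃ s ∈ Set.Iio t,
      ({X s, gradient (f0 (3 * m₁ * m₂) Lf ε) (X s),
        mvec ((Amat m₁ m₂ d Lf)ᵀ * Amat m₁ m₂ d Lf) (X s),
        mvec ((Abar m₁ m₂ d Lf)ᵀ * Abar m₁ m₂ d Lf) (X s),
        mvec (Abar m₁ m₂ d Lf)ᵀ (Y s)} :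
          Set (EuclideanSpace ℝ (Fin (3 * m₁ * m₂) × Fin d))))) ∧
    ∃ η : ℝ, 0 < η ∧
      ∃ ξ ∈ Submodule.span ℝ (⋃ s ∈ Set.Iio t,
        ({Y s, mvec (Abar m₁ m₂ d Lf * (Abar m₁ m₂ d Lf)ᵀ) (Y s),
          mvec (Abar m₁ m₂ d Lf) (X s)} :
            Set (EuclideanSpace ℝ (Fin (3 * m₂ - 1) × Fin d)))),
        ∃ p, IsProx η (gbar m₁ m₂ d Lf β) ξ p ∧
          Y t ∈ Submodule.span ℝ
            ({ξ, p} : Set (EuclideanSpace ℝ (Fin (3 * m₂ - 1) × Fin d)))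



section AuxProof
open RealInnerProductSpace

def psiD (u : ℝ) : ℝ := 2 * max u 0 * Real.exp (-(max u 0) ^ 2)
def phiD (v : ℝ) : ℝ := 4 / (1 + v ^ 2)

lemma Psi_eq (u : ℝ) : Psi u = 1 - Real.exp (-(max u 0) ^ 2) := by
  unfold Psi
  rcases le_or_gt u 0 with h | h
  · simp [h, max_eq_right h]
  · simp [not_le.2 h, max_eq_left h.le]

lemma hasDerivAt_sq_posPart (u : ℝ) :
    HasDerivAt (fun t : ℝ => max t 0 ^ 2) (2 * max u 0) u := by
  rcases lt_trichotomy u 0 with h | rfl | h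
  · have hev : (fun t : ℝ => max t 0 ^ 2) =ᶠ[nhds u] (fun _ => (0:ℝ)) := by
      filter_upwards [Iio_mem_nhds h] with t ht
      simp [max_eq_right (le_of_lt (Set.mem_Iio.mp ht))]
    have h0 : HasDerivAt (fun _ : ℝ => (0:ℝ)) 0 u := hasDerivAt_const _ _
    simpa [max_eq_right h.le] using h0.congr_of_eventuallyEq hev
  · rw [hasDerivAt_iff_tendsto_slope]
    have hb : ∀ t : ℝ, ‖slope (fun t : ℝ => max t 0 ^ 2) 0 t‖ ≤ |t| := by
      intro t
      rw [Real.norm_eq_abs]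
      rcases eq_or_ne t 0 with rfl | ht
      · simp [slope]
      · rw [slope_def_field]
        rcases le_or_gt t 0 with h' | h'
        · simp [max_eq_right h', max_self]
        · have he : ((max t 0) ^ 2 - (max (0:ℝ) 0) ^ 2) / (t - 0) = t := by
            rw [max_self, max_eq_left h'.le]
            field_simp
            ring
          rw [he]
    have habs : Filter.Tendsto (fun t : ℝ => |t|) (nhdsWithin 0 {(0:ℝ)}ᶜ) (nhds 0) := by
      have : Filter.Tendsto (fun t : ℝ => |t|) (nhds 0) (nhds 0) := by
        simpa using continuous_abs.tendsto (0:ℝ)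
      exact this.mono_left nhdsWithin_le_nhds
    simpa using squeeze_zero_norm hb habs
  · have hev : (fun t : ℝ => max t 0 ^ 2) =ᶠ[nhds u] (fun t => t ^ 2) := by
      filter_upwards [Ioi_mem_nhds h] with t ht
      simp [max_eq_left (le_of_lt (Set.mem_Ioi.mp ht))]
    have h0 : HasDerivAt (fun t : ℝ => t ^ 2) (2 * u) u := by
      simpa using (hasDerivAt_pow 2 u)
    simpa [max_eq_left h.le] using h0.congr_of_eventuallyEq hev

lemma hasDerivAt_Psi (u : ℝ) : HasDerivAt Psi (psiD u) u := by
  have h1 := hasDerivAt_sq_posPart u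
  have h3 : HasDerivAt (fun t : ℝ => Real.exp (-(max t 0 ^ 2)))
      (Real.exp (-(max u 0 ^ 2)) * -(2 * max u 0)) u := (h1.neg).exp
  have h4 := h3.const_sub 1
  have : Psi = fun t : ℝ => 1 - Real.exp (-(max t 0) ^ 2) := funext Psi_eq
  rw [this, psiD]
  refine h4.congr_deriv ?_
  ring

lemma lip_of_deriv {f f' : ℝ → ℝ} {C : ℝ} (hf : ∀ x, HasDerivAt f (f' x) x)
    (hb : ∀ x, |f' x| ≤ C) (a b : ℝ) : |f a - f b| ≤ C * |a - b| := by
  have := Convex.norm_image_sub_le_of_norm_hasDerivWithin_le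
    (f' := f') (fun x _ => (hf x).hasDerivWithinAt)
    (fun x _ => by simpa [Real.norm_eq_abs] using hb x) convex_univ
    (Set.mem_univ b) (Set.mem_univ a)
  simpa [Real.norm_eq_abs] using this

lemma Psi_abs_le (u : ℝ) : |Psi u| ≤ 1 := by
  rw [Psi_eq, abs_le]
  have h1 : Real.exp (-(max u 0) ^ 2) ≤ 1 := by
    rw [Real.exp_le_one_iff]; exact neg_nonpos.mpr (by positivity)
  have h2 : 0 < Real.exp (-(max u 0) ^ 2) := Real.exp_pos _
  constructor <;> linarith

lemma psiD_abs_le (u : ℝ) : |psiD u| ≤ 1 := by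
  unfold psiD
  set t := max u 0 with ht
  have h0 : 0 ≤ t := le_max_right _ _
  have h1 : 0 < Real.exp (t ^ 2) := Real.exp_pos _
  have h2 : 1 + t ^ 2 ≤ Real.exp (t ^ 2) := by
    have := Real.add_one_le_exp (t ^ 2); linarith
  rw [abs_of_nonneg (by positivity)]
  have h5 : 2 * t ≤ Real.exp (t ^ 2) := by nlinarith [sq_nonneg (t - 1)]
  calc 2 * t * Real.exp (-t ^ 2) ≤ Real.exp (t ^ 2) * Real.exp (-t ^ 2) :=
        mul_le_mul_of_nonneg_right h5 (Real.exp_pos _).le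
    _ = 1 := by rw [← Real.exp_add]; simp

lemma Phi_pos (v : ℝ) : 0 < Phi v := by
  have := Real.neg_pi_div_two_lt_arctan v
  unfold Phi; nlinarith [Real.pi_pos]

lemma Phi_abs_le (v : ℝ) : |Phi v| ≤ 4 * π := by
  have h1 := Real.arctan_lt_pi_div_two v
  have h2 := Real.neg_pi_div_two_lt_arctan v
  rw [abs_le]; unfold Phi; constructor <;> nlinarith [Real.pi_pos]

lemma phiD_abs_le (v : ℝ) : |phiD v| ≤ 4 := by
  unfold phiD
  have h1 : (1:ℝ) ≤ 1 + v ^ 2 := by nlinarith [sq_nonneg v]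
  rw [abs_of_nonneg (by positivity)]
  rw [div_le_iff₀ (by positivity)]; nlinarith


lemma hasDerivAt_Phi (v : ℝ) : HasDerivAt Phi (phiD v) v := by
  have := (Real.hasDerivAt_arctan v).const_mul 4
  have h2 := this.add_const (2 * π)
  unfold Phi phiD
  refine h2.congr_deriv ?_
  field_simp

lemma Psi_lip (a b : ℝ) : |Psi a - Psi b| ≤ 1 * |a - b| :=
  lip_of_deriv hasDerivAt_Psi psiD_abs_le a b

lemma Phi_lip (a b : ℝ) : |Phi a - Phi b| ≤ 4 * |a - b| :=
  lip_of_deriv hasDerivAt_Phi phiD_abs_le a b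

lemma psiD_lip (a b : ℝ) : |psiD a - psiD b| ≤ 2 * |a - b| := by
  have key : ∀ x y : ℝ, |2 * x * Real.exp (-x ^ 2) - 2 * y * Real.exp (-y ^ 2)| ≤ 2 * |x - y| := by
    refine lip_of_deriv (f' := fun x => (2 - 4 * x ^ 2) * Real.exp (-x ^ 2)) (fun x => ?_) (fun x => ?_)
    · have h1 : HasDerivAt (fun x : ℝ => Real.exp (-x ^ 2)) (Real.exp (-x ^ 2) * -(2 * x)) x := by
        have : HasDerivAt (fun x : ℝ => -x ^ 2) (-(2 * x)) x := by
          exact (hasDerivAt_pow 2 x).neg.congr_deriv (by simp)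
        exact this.exp
      have h2 : HasDerivAt (fun x : ℝ => 2 * x) 2 x := by
        simpa using (hasDerivAt_id x).const_mul 2
      have := h2.mul h1
      refine this.congr_deriv ?_
      ring
    · have h1 : 0 < Real.exp (x ^ 2) := Real.exp_pos _
      have h2 : 1 + x ^ 2 / 2 ≤ Real.exp (x ^ 2 / 2) := by
        have := Real.add_one_le_exp (x ^ 2 / 2); linarith
      have h3 : Real.exp (x ^ 2) = Real.exp (x ^ 2 / 2) * Real.exp (x ^ 2 / 2) := by
        rw [← Real.exp_add]; ring_nf
      have h4 : 0 < Real.exp (x ^ 2 / 2) := Real.exp_pos _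
      have hE : 1 + x ^ 2 + x ^ 4 / 4 ≤ Real.exp (x ^ 2) := by nlinarith
      rw [Real.exp_neg, abs_le]
      constructor
      · rw [neg_le, ← neg_mul, ← div_eq_mul_inv, div_le_iff₀ h1]
        nlinarith [sq_nonneg (x ^ 2 - 2)]
      · rw [← div_eq_mul_inv, div_le_iff₀ h1]
        nlinarith [sq_nonneg x, sq_nonneg (x ^ 2 - 2)]
  have := key (max a 0) (max b 0)
  unfold psiD
  calc |2 * max a 0 * Real.exp (-(max a 0) ^ 2) - 2 * max b 0 * Real.exp (-(max b 0) ^ 2)|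
      ≤ 2 * |max a 0 - max b 0| := this
    _ ≤ 2 * |a - b| := by
        have := abs_max_sub_max_le_abs a b 0
        linarith

lemma phiD_lip (a b : ℝ) : |phiD a - phiD b| ≤ 3 * |a - b| := by
  refine lip_of_deriv (f' := fun v => -8 * v / (1 + v ^ 2) ^ 2) (fun v => ?_) (fun v => ?_) a b
  · have h0 : (1 + v ^ 2) ≠ 0 := by positivity
    have h1 : HasDerivAt (fun v : ℝ => 1 + v ^ 2) (2 * v) v := by
      simpa using (hasDerivAt_pow 2 v).const_add 1
    have := (hasDerivAt_const v (4:ℝ)).div h1 h0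
    unfold phiD
    refine this.congr_deriv ?_
    field_simp
    ring
  · have h1 : (0:ℝ) < (1 + v ^ 2) ^ 2 := by positivity
    rw [abs_div, abs_of_pos h1, div_le_iff₀ h1]
    have : |(-8 : ℝ) * v| = 8 * |v| := by
      rw [abs_mul]; norm_num
    rw [this]
    nlinarith [sq_nonneg (v - 1), sq_nonneg (v ^ 2 - 1), sq_nonneg v, abs_nonneg v, sq_abs v, le_abs_self v, neg_abs_le v, sq_nonneg (|v| - 1), sq_nonneg (v^2 - |v|)]

/-- product perturbation bound -/
lemma prod_sub_bound {fa fa' gb gb' Mf Kfa Mg Kgb : ℝ}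
    (h1 : |fa - fa'| ≤ Kfa) (h2 : |gb - gb'| ≤ Kgb)
    (h3 : |fa'| ≤ Mf) (h4 : |gb| ≤ Mg) :
    |fa * gb - fa' * gb'| ≤ Kfa * Mg + Mf * Kgb := by
  have : fa * gb - fa' * gb' = (fa - fa') * gb + fa' * (gb - gb') := by ring
  rw [this]
  calc |(fa - fa') * gb + fa' * (gb - gb')| ≤ |(fa - fa') * gb| + |fa' * (gb - gb')| :=
        abs_add_le _ _
    _ = |fa - fa'| * |gb| + |fa'| * |gb - gb'| := by rw [abs_mul, abs_mul]
    _ ≤ Kfa * Mg + Mf * Kgb := by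
        have h5 := abs_nonneg (fa - fa')
        have h6 := abs_nonneg (gb - gb')
        have h7 := abs_nonneg fa'
        have h8 := abs_nonneg gb
        have := mul_le_mul h1 h4 h8 (le_trans h5 h1)
        have := mul_le_mul h3 h2 h6 (le_trans h7 h3)
        nlinarith

def qa (a b : ℝ) : ℝ := -(psiD (-a) * Phi (-b)) - psiD a * Phi b
def qb (a b : ℝ) : ℝ := -(Psi (-a) * phiD (-b)) - Psi a * phiD b

lemma qa_lip (a b a' b' : ℝ) :
    |qa a b - qa a' b'| ≤ 16 * π * |a - a'| + 8 * |b - b'| := by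
  have e1 : |psiD (-a) - psiD (-a')| ≤ 2 * |a - a'| := by
    have := psiD_lip (-a) (-a'); rw [show -a - -a' = -(a - a') by ring, abs_neg] at this
    exact this
  have e2 : |Phi (-b) - Phi (-b')| ≤ 4 * |b - b'| := by
    have := Phi_lip (-b) (-b'); rw [show -b - -b' = -(b - b') by ring, abs_neg] at this
    exact this
  have p1 : |psiD (-a) * Phi (-b) - psiD (-a') * Phi (-b')| ≤
      2 * |a - a'| * (4 * π) + 1 * (4 * |b - b'|) :=
    prod_sub_bound e1 e2 (psiD_abs_le _) (Phi_abs_le _)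
  have p2 : |psiD a * Phi b - psiD a' * Phi b'| ≤
      2 * |a - a'| * (4 * π) + 1 * (4 * |b - b'|) :=
    prod_sub_bound (psiD_lip a a') (Phi_lip b b') (psiD_abs_le _) (Phi_abs_le _)
  have : qa a b - qa a' b' =
      -((psiD (-a) * Phi (-b)) - (psiD (-a') * Phi (-b'))) - (psiD a * Phi b - psiD a' * Phi b') := by
    unfold qa; ring
  rw [this]
  calc |_| ≤ |(psiD (-a) * Phi (-b)) - (psiD (-a') * Phi (-b'))| + |psiD a * Phi b - psiD a' * Phi b'| := by
        rw [sub_eq_add_neg]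
        refine le_trans (abs_add_le _ _) ?_
        rw [abs_neg, abs_neg]
    _ ≤ 16 * π * |a - a'| + 8 * |b - b'| := by nlinarith [p1, p2]

lemma qb_lip (a b a' b' : ℝ) :
    |qb a b - qb a' b'| ≤ 8 * |a - a'| + 6 * |b - b'| := by
  have e1 : |Psi (-a) - Psi (-a')| ≤ 1 * |a - a'| := by
    have := Psi_lip (-a) (-a'); rw [show -a - -a' = -(a - a') by ring, abs_neg] at this
    exact this
  have e2 : |phiD (-b) - phiD (-b')| ≤ 3 * |b - b'| := by
    have := phiD_lip (-b) (-b'); rw [show -b - -b' = -(b - b') by ring, abs_neg] at this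
    exact this
  have p1 : |Psi (-a) * phiD (-b) - Psi (-a') * phiD (-b')| ≤
      1 * |a - a'| * 4 + 1 * (3 * |b - b'|) :=
    prod_sub_bound e1 e2 (Psi_abs_le _) (phiD_abs_le _)
  have p2 : |Psi a * phiD b - Psi a' * phiD b'| ≤
      1 * |a - a'| * 4 + 1 * (3 * |b - b'|) :=
    prod_sub_bound (Psi_lip a a') (phiD_lip b b') (Psi_abs_le _) (phiD_abs_le _)
  have : qb a b - qb a' b' =
      -((Psi (-a) * phiD (-b)) - (Psi (-a') * phiD (-b'))) - (Psi a * phiD b - Psi a' * phiD b') := by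
    unfold qb; ring
  rw [this]
  calc |_| ≤ |(Psi (-a) * phiD (-b)) - (Psi (-a') * phiD (-b'))| + |Psi a * phiD b - Psi a' * phiD b'| := by
        rw [sub_eq_add_neg]
        refine le_trans (abs_add_le _ _) ?_
        rw [abs_neg, abs_neg]
    _ ≤ 8 * |a - a'| + 6 * |b - b'| := by nlinarith [p1, p2]

variable {F : Type*} [NormedAddCommGroup F] [InnerProductSpace ℝ F] [CompleteSpace F]

lemma toDual_eq_iff {g : F} {L : F →L[ℝ] ℝ} (h : ∀ v, L v = (inner ℝ g v : ℝ)) :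
    (InnerProductSpace.toDual ℝ F) g = L := by
  ext v; rw [InnerProductSpace.toDual_apply_apply, h v]

lemma hga_add {f g : F → ℝ} {f' g' : F} {x : F} (hf : HasGradientAt f f' x)
    (hg : HasGradientAt g g' x) : HasGradientAt (fun z => f z + g z) (f' + g') x := by
  rw [hasGradientAt_iff_hasFDerivAt] at *
  have := hf.add hg
  refine this.congr_fderiv (toDual_eq_iff fun v => ?_).symm
  simp [inner_add_left]

lemma hga_const_mul {f : F → ℝ} {f' : F} {x : F} (c : ℝ) (hf : HasGradientAt f f' x) :
    HasGradientAt (fun z => c * f z) (c • f') x := by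
  rw [hasGradientAt_iff_hasFDerivAt] at *
  have := hf.const_mul c
  refine this.congr_fderiv (toDual_eq_iff fun v => ?_).symm
  simp [real_inner_smul_left]

lemma hga_neg {f : F → ℝ} {f' : F} {x : F} (hf : HasGradientAt f f' x) :
    HasGradientAt (fun z => -f z) (-f') x := by
  have := hga_const_mul (-1) hf
  simpa using this

lemma hga_sub {f g : F → ℝ} {f' g' : F} {x : F} (hf : HasGradientAt f f' x)
    (hg : HasGradientAt g g' x) : HasGradientAt (fun z => f z - g z) (f' - g') x := by
  have := hga_add hf (hga_neg hg)
  simpa [sub_eq_add_neg] using this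

lemma hga_const_add {f : F → ℝ} {f' : F} {x : F} (c : ℝ) (hf : HasGradientAt f f' x) :
    HasGradientAt (fun z => c + f z) f' x := by
  rw [hasGradientAt_iff_hasFDerivAt] at *
  exact hf.const_add c

lemma hga_sum {ι : Type*} {s : Finset ι} {f : ι → F → ℝ} {f' : ι → F} {x : F}
    (hf : ∀ i ∈ s, HasGradientAt (f i) (f' i) x) :
    HasGradientAt (fun z => ∑ i ∈ s, f i z) (∑ i ∈ s, f' i) x := by
  classical
  induction s using Finset.induction_on with
  | empty => simpa using (hasGradientAt_const x (0:ℝ) : HasGradientAt (fun _ : F => (0:ℝ)) 0 x)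
  | insert a s' hni ih =>
    rw [Finset.sum_insert hni]
    have h1 := hf a (Finset.mem_insert_self a s')
    have h2 := ih (fun i hi => hf i (Finset.mem_insert_of_mem hi))
    have := hga_add h1 h2
    convert this using 2
    exact Finset.sum_insert hni

lemma hga_mul {f g : F → ℝ} {f' g' : F} {x : F} (hf : HasGradientAt f f' x)
    (hg : HasGradientAt g g' x) :
    HasGradientAt (fun z => f z * g z) (g x • f' + f x • g') x := by
  rw [hasGradientAt_iff_hasFDerivAt] at *
  have := hf.mul hg
  refine this.congr_fderiv (toDual_eq_iff fun v => ?_).symm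
  simp [inner_add_left, real_inner_smul_left]
  ring

lemma hga_comp_smul {f : F → ℝ} {g : F} {α : ℝ} {x : F}
    (hf : HasGradientAt f g (α • x)) :
    HasGradientAt (fun z => f (α • z)) (α • g) x := by
  rw [hasGradientAt_iff_hasFDerivAt] at *
  have hs : HasFDerivAt (fun z : F => α • z) (α • ContinuousLinearMap.id ℝ F) x :=
    (ContinuousLinearMap.id ℝ F).hasFDerivAt.const_smul α
  have := hf.comp x hs
  refine this.congr_fderiv (toDual_eq_iff fun v => ?_).symm
  simp [real_inner_smul_left, real_inner_smul_right]

lemma hga_coord {d : ℕ} (G : ℝ → ℝ) (c : ℝ) (a : Fin d) (z : EuclideanSpace ℝ (Fin d))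
    (hG : HasDerivAt G c (z a)) :
    HasGradientAt (fun z : EuclideanSpace ℝ (Fin d) => G (z a))
      (c • EuclideanSpace.single a 1) z := by
  rw [hasGradientAt_iff_hasFDerivAt]
  have hp : HasFDerivAt (fun z : EuclideanSpace ℝ (Fin d) => z a)
      (EuclideanSpace.proj (𝕜 := ℝ) a) z := (EuclideanSpace.proj (𝕜 := ℝ) a).hasFDerivAt
  have := hG.comp_hasFDerivAt z hp
  refine this.congr_fderiv (toDual_eq_iff fun v => ?_).symm
  simp [real_inner_smul_left, EuclideanSpace.inner_single_left]

-- ======== new content ========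
def iv {d : ℕ} (hd : 0 < d) (k : ℕ) : Fin d := ⟨k % d, Nat.mod_lt _ hd⟩

lemma iv_val {d : ℕ} (hd : 0 < d) {k : ℕ} (hk : k < d) : (iv hd k : Fin d).val = k := by
  simp [iv, Nat.mod_eq_of_lt hk]

def Qf {d : ℕ} (z : EuclideanSpace ℝ (Fin d)) (a b : Fin d) : ℝ :=
  Psi (-(z a)) * Phi (-(z b)) - Psi (z a) * Phi (z b)

def GQ {d : ℕ} (z : EuclideanSpace ℝ (Fin d)) (a b : Fin d) : EuclideanSpace ℝ (Fin d) :=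
  qa (z a) (z b) • EuclideanSpace.single a 1 + qb (z a) (z b) • EuclideanSpace.single b 1

def Ghf (m i : ℕ) {d : ℕ} (hd : 0 < d) (z : EuclideanSpace ℝ (Fin d)) :
    EuclideanSpace ℝ (Fin d) :=
  (if i ≤ m / 3 then
    (3:ℝ) • ∑ j ∈ Finset.Icc 1 (d/2), GQ z (iv hd (2*j-2)) (iv hd (2*j-1))
   else if i ≤ 2*m/3 then 0
   else (3:ℝ) • ∑ j ∈ Finset.Icc 1 (d/2), GQ z (iv hd (2*j-1)) (iv hd (2*j)))
  + (-(Psi 1 * phiD (z (iv hd 0)))) • EuclideanSpace.single (iv hd 0) 1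

lemma zc_eq {d : ℕ} (hd : 0 < d) (z : EuclideanSpace ℝ (Fin d)) (j : ℕ)
    (h1 : 1 ≤ j) (h2 : j - 1 < d) : zc z j = z (iv hd (j-1)) := by
  unfold zc
  rw [dif_pos ⟨h1, h2⟩]
  exact congrArg _ (Fin.ext (by rw [iv_val hd h2]))

lemma phi_one_eq {d : ℕ} (hd : 0 < d) (z : EuclideanSpace ℝ (Fin d)) :
    phi z 1 = -(Psi 1) * Phi (z (iv hd 0)) := by
  unfold phi
  rw [if_pos rfl, zc_eq hd z 1 le_rfl (by omega)]
  ring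

lemma phi_two_eq {d : ℕ} (hd : 0 < d) (z : EuclideanSpace ℝ (Fin d)) (j : ℕ)
    (h1 : 1 ≤ j) (h2 : 2*j ≤ d) :
    phi z (2*j) = Qf z (iv hd (2*j-2)) (iv hd (2*j-1)) := by
  unfold phi Qf
  rw [if_neg (by omega), zc_eq hd z (2*j-1) (by omega) (by omega),
    zc_eq hd z (2*j) (by omega) (by omega)]
  have : 2*j - 1 - 1 = 2*j - 2 := by omega
  rw [this]

lemma phi_odd_eq {d : ℕ} (hd : 0 < d) (z : EuclideanSpace ℝ (Fin d)) (j : ℕ)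
    (h1 : 1 ≤ j) (h2 : 2*j < d) :
    phi z (2*j+1) = Qf z (iv hd (2*j-1)) (iv hd (2*j)) := by
  unfold phi Qf
  rw [if_neg (by omega), zc_eq hd z (2*j+1-1) (by omega) (by omega),
    zc_eq hd z (2*j+1) (by omega) (by omega)]
  have e1 : 2*j+1-1-1 = 2*j-1 := by omega
  have e2 : 2*j+1-1 = 2*j := by omega
  rw [e1, e2]

lemma hga_phi1 {d : ℕ} (hd : 0 < d) (z : EuclideanSpace ℝ (Fin d)) :
    HasGradientAt (fun z : EuclideanSpace ℝ (Fin d) => phi z 1)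
      ((-(Psi 1 * phiD (z (iv hd 0)))) • EuclideanSpace.single (iv hd 0) 1) z := by
  have h0 : (fun z : EuclideanSpace ℝ (Fin d) => phi z 1) =
      fun z => (-(Psi 1)) * Phi (z (iv hd 0)) := funext fun z => phi_one_eq hd z
  rw [h0]
  have := hga_const_mul (-(Psi 1)) (hga_coord Phi (phiD (z (iv hd 0))) (iv hd 0) z
    (hasDerivAt_Phi _))
  convert this using 1
  rw [smul_smul]
  ring_nf

lemma hga_Qf {d : ℕ} (z : EuclideanSpace ℝ (Fin d)) (a b : Fin d) :
    HasGradientAt (fun z => Qf z a b) (GQ z a b) z := by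
  have hPsiNegA : HasGradientAt (fun z : EuclideanSpace ℝ (Fin d) => Psi (-(z a)))
      ((psiD (-(z a)) * (-1)) • EuclideanSpace.single a 1) z :=
    hga_coord (fun t => Psi (-t)) _ a z
      ((hasDerivAt_Psi (-(z a))).comp (z a) (hasDerivAt_neg (z a)))
  have hPhiNegB : HasGradientAt (fun z : EuclideanSpace ℝ (Fin d) => Phi (-(z b)))
      ((phiD (-(z b)) * (-1)) • EuclideanSpace.single b 1) z :=
    hga_coord (fun t => Phi (-t)) _ b z
      ((hasDerivAt_Phi (-(z b))).comp (z b) (hasDerivAt_neg (z b)))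
  have hPsiA : HasGradientAt (fun z : EuclideanSpace ℝ (Fin d) => Psi (z a))
      (psiD (z a) • EuclideanSpace.single a 1) z :=
    hga_coord Psi _ a z (hasDerivAt_Psi (z a))
  have hPhiB : HasGradientAt (fun z : EuclideanSpace ℝ (Fin d) => Phi (z b))
      (phiD (z b) • EuclideanSpace.single b 1) z :=
    hga_coord Phi _ b z (hasDerivAt_Phi (z b))
  have := hga_sub (hga_mul hPsiNegA hPhiNegB) (hga_mul hPsiA hPhiB)
  convert this using 1
  · rfl
  unfold GQ qa qb
  module

lemma hga_hfun (m i : ℕ) {d : ℕ} (hd5 : 5 ≤ d) (hodd : d % 2 = 1)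
    (z : EuclideanSpace ℝ (Fin d)) :
    HasGradientAt (hfun m i) (Ghf m i (by omega) z) z := by
  have hd : 0 < d := by omega
  unfold hfun Ghf
  split_ifs with h1 h2
  · have he : (fun z : EuclideanSpace ℝ (Fin d) =>
        phi z 1 + 3 * ∑ j ∈ Finset.Icc 1 (d / 2), phi z (2 * j)) =
        fun z => (3 * ∑ j ∈ Finset.Icc 1 (d/2), Qf z (iv hd (2*j-2)) (iv hd (2*j-1)))
          + phi z 1 := by
      funext z
      have hs : ∑ j ∈ Finset.Icc 1 (d/2), phi z (2*j) =
          ∑ j ∈ Finset.Icc 1 (d/2), Qf z (iv hd (2*j-2)) (iv hd (2*j-1)) :=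
        Finset.sum_congr rfl (fun j hj => by
          rw [Finset.mem_Icc] at hj
          exact phi_two_eq hd z j hj.1 (by omega))
      rw [hs]; ring
    rw [he]
    exact hga_add (hga_const_mul 3 (hga_sum (fun j _ => hga_Qf z _ _))) (hga_phi1 hd z)
  · have := hga_phi1 hd z
    simpa using this
  · have he : (fun z : EuclideanSpace ℝ (Fin d) =>
        phi z 1 + 3 * ∑ j ∈ Finset.Icc 1 (d / 2), phi z (2 * j + 1)) =
        fun z => (3 * ∑ j ∈ Finset.Icc 1 (d/2), Qf z (iv hd (2*j-1)) (iv hd (2*j)))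
          + phi z 1 := by
      funext z
      have hs : ∑ j ∈ Finset.Icc 1 (d/2), phi z (2*j+1) =
          ∑ j ∈ Finset.Icc 1 (d/2), Qf z (iv hd (2*j-1)) (iv hd (2*j)) :=
        Finset.sum_congr rfl (fun j hj => by
          rw [Finset.mem_Icc] at hj
          exact phi_odd_eq hd z j hj.1 (by omega))
      rw [hs]; ring
    rw [he]
    exact hga_add (hga_const_mul 3 (hga_sum (fun j _ => hga_Qf z _ _))) (hga_phi1 hd z)

-- ============ Lipschitz part ============
lemma coord_abs_le_norm {d : ℕ} (w : EuclideanSpace ℝ (Fin d)) (i : Fin d) :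
    |w i| ≤ ‖w‖ := by
  rw [EuclideanSpace.norm_eq]
  rw [← Real.sqrt_sq_eq_abs]
  apply Real.sqrt_le_sqrt
  have : |w i| ^ 2 = w i ^ 2 := sq_abs _
  calc w i ^ 2 = ‖w i‖ ^ 2 := by rw [Real.norm_eq_abs, sq_abs]
    _ ≤ ∑ j, ‖w j‖ ^ 2 :=
        Finset.single_le_sum (f := fun j => ‖w j‖ ^ 2) (fun j _ => sq_nonneg _)
          (Finset.mem_univ i)

lemma inner_single_single' {d : ℕ} (p q : Fin d) (s t : ℝ) :
    ⟪EuclideanSpace.single p s, EuclideanSpace.single q t⟫ = if p = q then s * t else 0 := by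
  rw [EuclideanSpace.inner_single_left, EuclideanSpace.single_apply]
  by_cases h : p = q
  · simp [h]
  · simp [h, Ne.symm h]

lemma norm_sq_pairsum {d : ℕ} (s : Finset ℕ) (a b : ℕ → Fin d) (c e : ℕ → ℝ)
    (hab : ∀ j ∈ s, a j ≠ b j)
    (hdisj : ∀ j ∈ s, ∀ k ∈ s, j ≠ k → a j ≠ a k ∧ a j ≠ b k ∧ b j ≠ a k ∧ b j ≠ b k) :
    ‖∑ j ∈ s, (c j • EuclideanSpace.single (a j) (1:ℝ) + e j • EuclideanSpace.single (b j) 1)‖ ^ 2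
      = ∑ j ∈ s, (c j ^ 2 + e j ^ 2) := by
  rw [← real_inner_self_eq_norm_sq, sum_inner]
  refine Finset.sum_congr rfl (fun j hj => ?_)
  rw [inner_sum, Finset.sum_eq_single_of_mem j hj]
  · have habj := hab j hj
    simp only [inner_add_left, inner_add_right, real_inner_smul_left, real_inner_smul_right,
      inner_single_single', if_pos, if_neg habj, if_neg (Ne.symm habj), eq_self_iff_true, if_true]
    ring
  · intro k hk hkj
    obtain ⟨h1, h2, h3, h4⟩ := hdisj j hj k hk (Ne.symm hkj)
    simp only [inner_add_left, inner_add_right, real_inner_smul_left, real_inner_smul_right,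
      inner_single_single', if_neg h1, if_neg h2, if_neg h3, if_neg h4]
    ring

lemma sum_pair_sq_le {d : ℕ} (s : Finset ℕ) (a b : ℕ → Fin d)
    (hab : ∀ j ∈ s, a j ≠ b j)
    (hdisj : ∀ j ∈ s, ∀ k ∈ s, j ≠ k → a j ≠ a k ∧ a j ≠ b k ∧ b j ≠ a k ∧ b j ≠ b k)
    (w : EuclideanSpace ℝ (Fin d)) :
    ∑ j ∈ s, (w (a j) ^ 2 + w (b j) ^ 2) ≤ ‖w‖ ^ 2 := by
  classical
  have hnorm : ‖w‖ ^ 2 = ∑ i, w i ^ 2 := by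
    rw [EuclideanSpace.norm_eq, Real.sq_sqrt (by positivity)]
    simp [sq_abs]
  rw [hnorm]
  have hpd : (s : Set ℕ).PairwiseDisjoint (fun j => ({a j, b j} : Finset (Fin d))) := by
    intro j hj k hk hjk
    obtain ⟨h1, h2, h3, h4⟩ := hdisj j hj k hk hjk
    refine Finset.disjoint_left.mpr ?_
    intro x hx hx'
    simp only [Finset.mem_insert, Finset.mem_singleton] at hx hx'
    rcases hx with rfl | rfl <;> rcases hx' with h | h <;> tauto
  have heq : ∑ j ∈ s, (w (a j) ^ 2 + w (b j) ^ 2)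
      = ∑ i ∈ s.biUnion (fun j => ({a j, b j} : Finset (Fin d))), w i ^ 2 := by
    rw [Finset.sum_biUnion hpd]
    exact Finset.sum_congr rfl (fun j hj => by rw [Finset.sum_pair (hab j hj)])
  rw [heq]
  exact Finset.sum_le_sum_of_subset_of_nonneg (Finset.subset_univ _) (fun i _ _ => sq_nonneg _)

lemma GQ_sum_lip {d : ℕ} (s : Finset ℕ) (a b : ℕ → Fin d)
    (hab : ∀ j ∈ s, a j ≠ b j)
    (hdisj : ∀ j ∈ s, ∀ k ∈ s, j ≠ k → a j ≠ a k ∧ a j ≠ b k ∧ b j ≠ a k ∧ b j ≠ b k)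
    (z z' : EuclideanSpace ℝ (Fin d)) :
    ‖(∑ j ∈ s, GQ z (a j) (b j)) - ∑ j ∈ s, GQ z' (a j) (b j)‖ ≤ (25 * π - 1) * ‖z - z'‖ := by
  set w := z - z' with hw
  set c : ℕ → ℝ := fun j => qa (z (a j)) (z (b j)) - qa (z' (a j)) (z' (b j)) with hc
  set e : ℕ → ℝ := fun j => qb (z (a j)) (z (b j)) - qb (z' (a j)) (z' (b j)) with he
  have hsub : (∑ j ∈ s, GQ z (a j) (b j)) - ∑ j ∈ s, GQ z' (a j) (b j)
      = ∑ j ∈ s, (c j • EuclideanSpace.single (a j) (1:ℝ) + e j • EuclideanSpace.single (b j) 1) := by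
    rw [← Finset.sum_sub_distrib]
    refine Finset.sum_congr rfl (fun j hj => ?_)
    unfold GQ
    simp only [hc, he]
    module
  rw [hsub]
  have hcoord : ∀ i : Fin d, z i - z' i = w i := fun i => by simp [hw]
  have hbound : ∀ j ∈ s, c j ^ 2 + e j ^ 2 ≤ (256 * π ^ 2 + 164) * (w (a j) ^ 2 + w (b j) ^ 2) := by
    intro j hj
    have hca := qa_lip (z (a j)) (z (b j)) (z' (a j)) (z' (b j))
    have hcb := qb_lip (z (a j)) (z (b j)) (z' (a j)) (z' (b j))
    set X := |z (a j) - z' (a j)| with hX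
    set Y := |z (b j) - z' (b j)| with hY
    have hX0 : 0 ≤ X := abs_nonneg _
    have hY0 : 0 ≤ Y := abs_nonneg _
    have h1 : c j ^ 2 ≤ (16 * π * X + 8 * Y) ^ 2 := by
      rw [← sq_abs (c j)]
      exact pow_le_pow_left₀ (abs_nonneg _) hca 2
    have h2 : e j ^ 2 ≤ (8 * X + 6 * Y) ^ 2 := by
      rw [← sq_abs (e j)]
      exact pow_le_pow_left₀ (abs_nonneg _) hcb 2
    have hXsq : X ^ 2 = w (a j) ^ 2 := by rw [hX, sq_abs, hcoord]
    have hYsq : Y ^ 2 = w (b j) ^ 2 := by rw [hY, sq_abs, hcoord]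
    rw [← hXsq, ← hYsq]
    nlinarith [sq_nonneg (8 * X - 16 * π * Y), sq_nonneg (6 * X - 8 * Y), Real.pi_pos,
      sq_nonneg X, sq_nonneg Y, mul_nonneg hX0 hY0]
  have hnsq : ‖∑ j ∈ s, (c j • EuclideanSpace.single (a j) (1:ℝ)
      + e j • EuclideanSpace.single (b j) 1)‖ ^ 2 ≤ (256 * π ^ 2 + 164) * ‖w‖ ^ 2 := by
    rw [norm_sq_pairsum s a b c e hab hdisj]
    calc ∑ j ∈ s, (c j ^ 2 + e j ^ 2)
        ≤ ∑ j ∈ s, (256 * π ^ 2 + 164) * (w (a j) ^ 2 + w (b j) ^ 2) :=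
          Finset.sum_le_sum hbound
      _ = (256 * π ^ 2 + 164) * ∑ j ∈ s, (w (a j) ^ 2 + w (b j) ^ 2) := by
          rw [Finset.mul_sum]
      _ ≤ (256 * π ^ 2 + 164) * ‖w‖ ^ 2 := by
          have := sum_pair_sq_le s a b hab hdisj w
          nlinarith [Real.pi_pos]
  have hpi : (3:ℝ) < π := Real.pi_gt_three
  have h25 : (0:ℝ) ≤ 25 * π - 1 := by nlinarith
  have hfinal : ‖∑ j ∈ s, (c j • EuclideanSpace.single (a j) (1:ℝ)
      + e j • EuclideanSpace.single (b j) 1)‖ ^ 2 ≤ ((25 * π - 1) * ‖w‖) ^ 2 := by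
    calc _ ≤ (256 * π ^ 2 + 164) * ‖w‖ ^ 2 := hnsq
      _ ≤ ((25 * π - 1) * ‖w‖) ^ 2 := by
          nlinarith [mul_nonneg (show (0:ℝ) ≤ 369 * π ^ 2 - 50 * π - 163 by nlinarith)
            (sq_nonneg ‖w‖)]
  have hnn : 0 ≤ (25 * π - 1) * ‖w‖ := mul_nonneg h25 (norm_nonneg _)
  have := Real.sqrt_le_sqrt hfinal
  rwa [Real.sqrt_sq (norm_nonneg _), Real.sqrt_sq hnn] at this

lemma Ghf_lip (m i : ℕ) {d : ℕ} (hd5 : 5 ≤ d) (hodd : d % 2 = 1) (hd : 0 < d)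
    (z z' : EuclideanSpace ℝ (Fin d)) :
    ‖Ghf m i hd z - Ghf m i hd z'‖ ≤ 75 * π * ‖z - z'‖ := by
  have hpi : (3:ℝ) < π := Real.pi_gt_three
  have hΔ0 : (0:ℝ) ≤ ‖z - z'‖ := norm_nonneg _
  have hne : ∀ (p q : ℕ), p < d → q < d → p ≠ q → iv hd p ≠ iv hd q := by
    intro p q hp hq hpq heq
    apply hpq
    have := congrArg Fin.val heq
    rwa [iv_val hd hp, iv_val hd hq] at this
  have hterm0 : ‖(-(Psi 1 * phiD (z (iv hd 0)))) • EuclideanSpace.single (iv hd 0) (1:ℝ)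
      - (-(Psi 1 * phiD (z' (iv hd 0)))) • EuclideanSpace.single (iv hd 0) 1‖
      ≤ 3 * ‖z - z'‖ := by
    rw [← sub_smul, norm_smul, EuclideanSpace.norm_single]
    have e1 : -(Psi 1 * phiD (z (iv hd 0))) - -(Psi 1 * phiD (z' (iv hd 0)))
        = Psi 1 * (phiD (z' (iv hd 0)) - phiD (z (iv hd 0))) := by ring
    rw [Real.norm_eq_abs, e1, abs_mul]
    have h2 : |phiD (z' (iv hd 0)) - phiD (z (iv hd 0))| ≤ 3 * ‖z - z'‖ := by
      refine le_trans (phiD_lip _ _) ?_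
      have hzz : (z - z') (iv hd 0) = z (iv hd 0) - z' (iv hd 0) := by simp
      rw [abs_sub_comm, ← hzz]
      have := coord_abs_le_norm (z - z') (iv hd 0)
      linarith
    have h3 := Psi_abs_le 1
    have h4 := abs_nonneg (phiD (z' (iv hd 0)) - phiD (z (iv hd 0)))
    calc |Psi 1| * |phiD (z' (iv hd 0)) - phiD (z (iv hd 0))| * ‖(1:ℝ)‖
        = |Psi 1| * |phiD (z' (iv hd 0)) - phiD (z (iv hd 0))| := by
          rw [norm_one, mul_one]
      _ ≤ 1 * (3 * ‖z - z'‖) := by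
          apply mul_le_mul h3 h2 h4 zero_le_one
      _ = 3 * ‖z - z'‖ := by ring
  unfold Ghf
  split_ifs with h1 h2
  · set S := ∑ j ∈ Finset.Icc 1 (d/2), GQ z (iv hd (2*j-2)) (iv hd (2*j-1)) with hS
    set S' := ∑ j ∈ Finset.Icc 1 (d/2), GQ z' (iv hd (2*j-2)) (iv hd (2*j-1)) with hS'
    have hSS : ‖S - S'‖ ≤ (25 * π - 1) * ‖z - z'‖ := by
      refine GQ_sum_lip _ _ _ ?_ ?_ z z'
      · intro j hj
        rw [Finset.mem_Icc] at hj
        exact hne _ _ (by omega) (by omega) (by omega)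
      · intro j hj k hk hjk
        rw [Finset.mem_Icc] at hj hk
        exact ⟨hne _ _ (by omega) (by omega) (by omega), hne _ _ (by omega) (by omega) (by omega),
          hne _ _ (by omega) (by omega) (by omega), hne _ _ (by omega) (by omega) (by omega)⟩
    have hsplit : (3:ℝ) • S + (-(Psi 1 * phiD (z (iv hd 0)))) • EuclideanSpace.single (iv hd 0) (1:ℝ)
        - ((3:ℝ) • S' + (-(Psi 1 * phiD (z' (iv hd 0)))) • EuclideanSpace.single (iv hd 0) 1)
        = (3:ℝ) • (S - S') + ((-(Psi 1 * phiD (z (iv hd 0)))) • EuclideanSpace.single (iv hd 0) (1:ℝ)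
          - (-(Psi 1 * phiD (z' (iv hd 0)))) • EuclideanSpace.single (iv hd 0) 1) := by
      module
    rw [hsplit]
    calc ‖_ + _‖ ≤ ‖(3:ℝ) • (S - S')‖ + _ := norm_add_le _ _
      _ ≤ 3 * ((25 * π - 1) * ‖z - z'‖) + 3 * ‖z - z'‖ := by
          rw [norm_smul, Real.norm_ofNat]
          exact add_le_add (by nlinarith) hterm0
      _ = 75 * π * ‖z - z'‖ := by ring
  · simp only [zero_add]
    refine le_trans hterm0 ?_
    nlinarith
  · set S := ∑ j ∈ Finset.Icc 1 (d/2), GQ z (iv hd (2*j-1)) (iv hd (2*j)) with hS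
    set S' := ∑ j ∈ Finset.Icc 1 (d/2), GQ z' (iv hd (2*j-1)) (iv hd (2*j)) with hS'
    have hSS : ‖S - S'‖ ≤ (25 * π - 1) * ‖z - z'‖ := by
      refine GQ_sum_lip _ _ _ ?_ ?_ z z'
      · intro j hj
        rw [Finset.mem_Icc] at hj
        exact hne _ _ (by omega) (by omega) (by omega)
      · intro j hj k hk hjk
        rw [Finset.mem_Icc] at hj hk
        exact ⟨hne _ _ (by omega) (by omega) (by omega), hne _ _ (by omega) (by omega) (by omega),
          hne _ _ (by omega) (by omega) (by omega), hne _ _ (by omega) (by omega) (by omega)⟩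
    have hsplit : (3:ℝ) • S + (-(Psi 1 * phiD (z (iv hd 0)))) • EuclideanSpace.single (iv hd 0) (1:ℝ)
        - ((3:ℝ) • S' + (-(Psi 1 * phiD (z' (iv hd 0)))) • EuclideanSpace.single (iv hd 0) 1)
        = (3:ℝ) • (S - S') + ((-(Psi 1 * phiD (z (iv hd 0)))) • EuclideanSpace.single (iv hd 0) (1:ℝ)
          - (-(Psi 1 * phiD (z' (iv hd 0)))) • EuclideanSpace.single (iv hd 0) 1) := by
      module
    rw [hsplit]
    calc ‖_ + _‖ ≤ ‖(3:ℝ) • (S - S')‖ + _ := norm_add_le _ _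
      _ ≤ 3 * ((25 * π - 1) * ‖z - z'‖) + 3 * ‖z - z'‖ := by
          rw [norm_smul, Real.norm_ofNat]
          exact add_le_add (by nlinarith) hterm0
      _ = 75 * π * ‖z - z'‖ := by ring

-- ========== ff gradient ==========
def Gff (m : ℕ) (Lf ε : ℝ) (i : ℕ) {d : ℕ} (hd : 0 < d)
    (z : EuclideanSpace ℝ (Fin d)) : EuclideanSpace ℝ (Fin d) :=
  (300 * π * ε ^ 2 / (m * Lf) * (Real.sqrt m * Lf / (150 * π * ε))) •
    Ghf m i hd ((Real.sqrt m * Lf / (150 * π * ε)) • z)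

lemma hga_ff (m : ℕ) (Lf ε : ℝ) (i : ℕ) {d : ℕ} (hd5 : 5 ≤ d) (hodd : d % 2 = 1)
    (z : EuclideanSpace ℝ (Fin d)) :
    HasGradientAt (ff m Lf ε i) (Gff m Lf ε i (by omega) z) z := by
  have hd : 0 < d := by omega
  unfold ff Gff
  set α := Real.sqrt m * Lf / (150 * π * ε) with hα
  have h1 : HasGradientAt (fun z : EuclideanSpace ℝ (Fin d) => hfun m i (α • z))
      (α • Ghf m i hd (α • z)) z := hga_comp_smul (hga_hfun m i hd5 hodd (α • z))
  have h2 := hga_const_mul (300 * π * ε ^ 2 / (↑m * Lf)) h1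
  convert h2 using 1
  rw [smul_smul]

lemma Gff_lip (m : ℕ) (Lf ε : ℝ) (i : ℕ) {d : ℕ} (hd : 0 < d) (hd5 : 5 ≤ d)
    (hodd : d % 2 = 1) (hm : 1 ≤ m) (hLf : 0 < Lf) (hε : 0 < ε)
    (p q : EuclideanSpace ℝ (Fin d)) :
    ‖Gff m Lf ε i hd p - Gff m Lf ε i hd q‖ ≤ Lf * ‖p - q‖ := by
  have hπ := Real.pi_pos
  have hm0 : (0:ℝ) < m := by exact_mod_cast hm
  have hsm : 0 < Real.sqrt m := Real.sqrt_pos.mpr hm0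
  unfold Gff
  set C := 300 * π * ε ^ 2 / (↑m * Lf) with hC
  set α := Real.sqrt m * Lf / (150 * π * ε) with hα
  have hαpos : 0 < α := by rw [hα]; positivity
  have hCpos : 0 < C := by rw [hC]; positivity
  rw [← smul_sub, norm_smul]
  have hlip := Ghf_lip m i hd5 hodd hd (α • p) (α • q)
  rw [← smul_sub, norm_smul, Real.norm_eq_abs, abs_of_pos hαpos] at hlip
  have hkey : C * α ^ 2 * (75 * π) = Lf := by
    have hsq : Real.sqrt m ^ 2 = (m:ℝ) := Real.sq_sqrt hm0.le
    rw [hC, hα, div_pow, mul_pow, mul_pow, hsq]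
    field_simp
    ring
  rw [Real.norm_eq_abs, abs_of_pos (by positivity : (0:ℝ) < C * α)]
  calc C * α * ‖Ghf m i hd (α • p) - Ghf m i hd (α • q)‖
      ≤ C * α * (75 * π * (α * ‖p - q‖)) := by
        apply mul_le_mul_of_nonneg_left hlip (by positivity)
    _ = C * α ^ 2 * (75 * π) * ‖p - q‖ := by ring
    _ = Lf * ‖p - q‖ := by rw [hkey]

-- ========== f0 gradient ==========
def emb (m d i : ℕ) (v : EuclideanSpace ℝ (Fin d)) :
    EuclideanSpace ℝ (Fin m × Fin d) :=
  WithLp.toLp 2 (fun p => if p.1.val + 1 = i then v p.2 else 0)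

def blkCLM (m d i : ℕ) :
    EuclideanSpace ℝ (Fin m × Fin d) →L[ℝ] EuclideanSpace ℝ (Fin d) :=
  LinearMap.toContinuousLinearMap
    { toFun := fun x => blkN x i
      map_add' := by
        intro x y; ext j; unfold blkN; split_ifs with h
        · rfl
        · simp
      map_smul' := by
        intro c x; ext j; unfold blkN; split_ifs with h
        · rfl
        · simp }

lemma blkCLM_apply (m d i : ℕ) (x : EuclideanSpace ℝ (Fin m × Fin d)) :
    blkCLM m d i x = blkN x i := rfl

lemma emb_inner (m d i : ℕ) (hi : 1 ≤ i) (him : i - 1 < m)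
    (g : EuclideanSpace ℝ (Fin d)) (v : EuclideanSpace ℝ (Fin m × Fin d)) :
    ⟪emb m d i g, v⟫ = ⟪g, blkN v i⟫ := by
  rw [PiLp.inner_apply, PiLp.inner_apply]
  simp only [RCLike.inner_apply, conj_trivial]
  rw [Fintype.sum_prod_type]
  rw [Finset.sum_eq_single (⟨i - 1, him⟩ : Fin m)]
  · apply Finset.sum_congr rfl
    intro j _
    unfold emb blkN
    simp only [WithLp.ofLp_toLp]
    rw [if_pos (show (⟨i - 1, him⟩ : Fin m).val + 1 = i by simp; omega), dif_pos ⟨hi, him⟩]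
  · intro k _ hk
    apply Finset.sum_eq_zero
    intro j _
    unfold emb
    simp only [WithLp.ofLp_toLp]
    rw [if_neg]
    · simp
    · intro hcontra
      apply hk
      apply Fin.ext
      simp at hcontra ⊢
      omega
  · intro h
    exact absurd (Finset.mem_univ _) h

lemma hga_f0 (m : ℕ) (Lf ε : ℝ) {d : ℕ} (hd5 : 5 ≤ d) (hodd : d % 2 = 1)
    (x : EuclideanSpace ℝ (Fin m × Fin d)) :
    HasGradientAt (f0 m Lf ε)
      (∑ i ∈ Finset.Icc 1 m, emb m d i (Gff m Lf ε i (by omega) (blkN x i))) x := by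
  have hd : 0 < d := by omega
  unfold f0
  refine hga_sum (fun i hi => ?_)
  rw [Finset.mem_Icc] at hi
  have hf := (hga_ff m Lf ε i hd5 hodd (blkN x i)).hasFDerivAt
  have hcomp := hf.comp x (blkCLM m d i).hasFDerivAt
  rw [hasGradientAt_iff_hasFDerivAt]
  have hfun_eq : (fun x : EuclideanSpace ℝ (Fin m × Fin d) => ff m Lf ε i (blkN x i)) =
      (ff m Lf ε i (d := d)) ∘ (blkCLM m d i) := rfl
  rw [hfun_eq]
  have hdual : (InnerProductSpace.toDual ℝ _)
      (emb m d i (Gff m Lf ε i (by omega : 0 < d) (blkN x i))) =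
      ((InnerProductSpace.toDual ℝ _) (Gff m Lf ε i (by omega : 0 < d) (blkN x i))).comp
        (blkCLM m d i) := by
    refine toDual_eq_iff (fun v => ?_)
    rw [ContinuousLinearMap.comp_apply, InnerProductSpace.toDual_apply_apply, blkCLM_apply]
    exact (emb_inner m d i hi.1 (by omega) _ v).symm
  rw [hdual]
  exact hcomp

lemma norm_sq_eq {ι : Type*} [Fintype ι] (v : EuclideanSpace ℝ ι) :
    ‖v‖ ^ 2 = ∑ i, v i ^ 2 := by
  rw [EuclideanSpace.norm_eq, Real.sq_sqrt (by positivity)]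
  simp [sq_abs]

lemma mvec_transpose_inner {ι κ : Type*} [Fintype ι] [Fintype κ]
    (M : Matrix ι κ ℝ) (γ : EuclideanSpace ℝ ι) (u : EuclideanSpace ℝ κ) :
    ⟪mvec Mᵀ γ, u⟫ = ⟪γ, mvec M u⟫ := by
  unfold mvec
  rw [PiLp.inner_apply, PiLp.inner_apply]
  simp only [RCLike.inner_apply, conj_trivial, Matrix.transpose_apply]
  have lhs : ∑ q, (∑ p, M p q * γ p) * u q = ∑ q, ∑ p, M p q * γ p * u q :=
    Finset.sum_congr rfl fun q _ => by rw [Finset.sum_mul]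
  have rhs : ∑ p, γ p * (∑ q, M p q * u q) = ∑ p, ∑ q, M p q * γ p * u q :=
    Finset.sum_congr rfl fun p _ => by
      rw [Finset.mul_sum]
      exact Finset.sum_congr rfl fun q _ => by ring
  simp_rw [Finset.mul_sum, Finset.sum_mul]
  rw [Finset.sum_comm]
  exact Finset.sum_congr rfl fun _ _ => Finset.sum_congr rfl fun _ _ => by ring

lemma sum_Icc_fin {m : ℕ} (hm : 1 ≤ m) (g : Fin m → ℝ) :
    ∑ i ∈ Finset.Icc 1 m, (if h : 1 ≤ i ∧ i - 1 < m then g ⟨i - 1, h.2⟩ else 0)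
      = ∑ k : Fin m, g k := by
  refine Finset.sum_nbij' (fun i => (⟨min (i - 1) (m - 1), by omega⟩ : Fin m))
    (fun k => k.val + 1) ?_ ?_ ?_ ?_ ?_
  · intro a _; exact Finset.mem_univ _
  · intro k _
    have hk := k.isLt
    simp only [Finset.mem_Icc]
    omega
  · intro a ha
    have ha' := Finset.mem_Icc.mp ha
    simp only
    omega
  · intro k _
    have hk := k.isLt
    apply Fin.ext
    simp only
    omega
  · intro a ha
    have ha' := Finset.mem_Icc.mp ha
    rw [dif_pos ⟨ha'.1, by omega⟩]
    congr 1
    apply Fin.ext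
    simp only
    omega

lemma tele (Y : ℕ → ℝ) (a b : ℕ) (hab : a ≤ b) :
    |Y b - Y a| ≤ ∑ t ∈ Finset.Ico a b, |Y (t + 1) - Y t| := by
  induction b with
  | zero =>
    have : a = 0 := by omega
    subst this; simp
  | succ n ih =>
    rcases Nat.lt_or_ge a (n + 1) with h | h
    · have han : a ≤ n := by omega
      rw [Finset.sum_Ico_succ_top han]
      have h1 := ih han
      have h2 : |Y (n + 1) - Y a| ≤ |Y (n + 1) - Y n| + |Y n - Y a| := abs_sub_le _ _ _
      linarith
    · have : a = n + 1 := by omega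
      subst this; simp

lemma avg_dev {m : ℕ} (hm : 1 ≤ m) (y : Fin m → ℝ) :
    ∑ i : Fin m, (y i - (m:ℝ)⁻¹ * ∑ k, y k) ^ 2
      ≤ (m:ℝ) ^ 2 * ∑ t ∈ Finset.range (m - 1),
          ((if h : t + 1 < m then y ⟨t + 1, h⟩ else 0) - (if h : t < m then y ⟨t, h⟩ else 0)) ^ 2 := by
  set Y : ℕ → ℝ := fun t => if h : t < m then y ⟨t, h⟩ else 0 with hY
  set D := ∑ t ∈ Finset.range (m - 1), (Y (t + 1) - Y t) ^ 2 with hD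
  have hD0 : 0 ≤ D := Finset.sum_nonneg (fun t _ => sq_nonneg _)
  have hm0 : (0:ℝ) < m := by exact_mod_cast hm
  -- pairwise bound
  have pair : ∀ p q : Fin m, (y p - y q) ^ 2 ≤ (m - 1 : ℝ) * D := by
    intro p q
    wlog hpq : q.val ≤ p.val generalizing p q
    · have := this q p (by omega)
      nlinarith [sq_nonneg (y p - y q)]
    have hyp : y p = Y p.val := by simp [hY, p.isLt]
    have hyq : y q = Y q.val := by simp [hY, q.isLt]
    have h1 : |Y p.val - Y q.val| ≤ ∑ t ∈ Finset.Ico q.val p.val, |Y (t + 1) - Y t| :=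
      tele Y q.val p.val hpq
    have h2 : (∑ t ∈ Finset.Ico q.val p.val, |Y (t + 1) - Y t|) ^ 2
        ≤ (Finset.Ico q.val p.val).card * ∑ t ∈ Finset.Ico q.val p.val, |Y (t + 1) - Y t| ^ 2 :=
      sq_sum_le_card_mul_sum_sq
    have hsub : Finset.Ico q.val p.val ⊆ Finset.range (m - 1) := by
      intro t ht
      rw [Finset.mem_Ico] at ht
      rw [Finset.mem_range]
      have := p.isLt
      omega
    have h3 : ∑ t ∈ Finset.Ico q.val p.val, |Y (t + 1) - Y t| ^ 2 ≤ D := by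
      rw [hD]
      refine le_trans (le_of_eq ?_) (Finset.sum_le_sum_of_subset_of_nonneg hsub
        (fun t _ _ => sq_nonneg _))
      exact Finset.sum_congr rfl (fun t _ => by rw [sq_abs])
    have hcard : ((Finset.Ico q.val p.val).card : ℝ) ≤ (m - 1 : ℝ) := by
      rw [Nat.card_Ico]
      have := p.isLt
      have h4 : p.val - q.val ≤ m - 1 := by omega
      calc ((p.val - q.val : ℕ) : ℝ) ≤ ((m - 1 : ℕ) : ℝ) := by exact_mod_cast h4
        _ = (m : ℝ) - 1 := by
            have : (1:ℕ) ≤ m := hm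
            push_cast [Nat.cast_sub this]
            ring
    have h5 : (y p - y q) ^ 2 = |Y p.val - Y q.val| ^ 2 := by
      rw [sq_abs, hyp, hyq]
    rw [h5]
    calc |Y p.val - Y q.val| ^ 2 ≤ (∑ t ∈ Finset.Ico q.val p.val, |Y (t + 1) - Y t|) ^ 2 := by
          apply pow_le_pow_left₀ (abs_nonneg _) h1
      _ ≤ (Finset.Ico q.val p.val).card * ∑ t ∈ Finset.Ico q.val p.val, |Y (t + 1) - Y t| ^ 2 := h2
      _ ≤ (m - 1 : ℝ) * D := by
          apply mul_le_mul hcard h3 (Finset.sum_nonneg (fun t _ => sq_nonneg _)) (by linarith)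
  -- per-i bound
  have per_i : ∀ p : Fin m, (y p - (m:ℝ)⁻¹ * ∑ k, y k) ^ 2 ≤ (m - 1 : ℝ) * D := by
    intro p
    have hexp : y p - (m:ℝ)⁻¹ * ∑ k, y k = (m:ℝ)⁻¹ * ∑ k, (y p - y k) := by
      rw [Finset.sum_sub_distrib, Finset.sum_const, Finset.card_univ, Fintype.card_fin]
      field_simp
      ring
    rw [hexp, mul_pow]
    have h6 : (∑ k, (y p - y k)) ^ 2 ≤ (m : ℝ) * ∑ k, (y p - y k) ^ 2 := by
      have := sq_sum_le_card_mul_sum_sq (s := (Finset.univ : Finset (Fin m)))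
        (f := fun k => y p - y k)
      simpa [Finset.card_univ] using this
    have h7 : ∑ k : Fin m, (y p - y k) ^ 2 ≤ (m:ℝ) * ((m - 1 : ℝ) * D) := by
      calc ∑ k : Fin m, (y p - y k) ^ 2 ≤ ∑ k : Fin m, (m - 1 : ℝ) * D :=
            Finset.sum_le_sum (fun k _ => pair p k)
        _ = (m:ℝ) * ((m - 1 : ℝ) * D) := by
            rw [Finset.sum_const, Finset.card_univ, Fintype.card_fin]; simp [nsmul_eq_mul]
    have hinv : ((m:ℝ)⁻¹) ^ 2 * (m:ℝ) ^ 2 = 1 := by field_simp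
    have h8 : (∑ k, (y p - y k)) ^ 2 ≤ (m:ℝ) ^ 2 * ((m - 1 : ℝ) * D) := by nlinarith
    calc ((m:ℝ)⁻¹) ^ 2 * (∑ k, (y p - y k)) ^ 2
        ≤ ((m:ℝ)⁻¹) ^ 2 * ((m:ℝ) ^ 2 * ((m - 1 : ℝ) * D)) :=
          mul_le_mul_of_nonneg_left h8 (sq_nonneg _)
      _ = (((m:ℝ)⁻¹) ^ 2 * (m:ℝ) ^ 2) * ((m - 1 : ℝ) * D) := by ring
      _ = (m - 1 : ℝ) * D := by rw [hinv, one_mul]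
  calc ∑ i : Fin m, (y i - (m:ℝ)⁻¹ * ∑ k, y k) ^ 2 ≤ ∑ i : Fin m, (m - 1 : ℝ) * D :=
        Finset.sum_le_sum (fun i _ => per_i i)
    _ = (m:ℝ) * ((m - 1:ℝ) * D) := by
        rw [Finset.sum_const, Finset.card_univ, Fintype.card_fin]; simp [nsmul_eq_mul]
    _ ≤ (m:ℝ) ^ 2 * D := by nlinarith

lemma mvecH_apply (m d : ℕ) (Lf : ℝ) (hm : 2 ≤ m) (x : EuclideanSpace ℝ (Fin m × Fin d))
    (p : Fin (m - 1) × Fin d) :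
    mvec (Hmat m d Lf) x p
      = (m:ℝ) * Lf * (x (⟨p.1.val + 1, by omega⟩, p.2) - x (⟨p.1.val, by omega⟩, p.2)) := by
  unfold mvec Hmat
  simp only [WithLp.ofLp_toLp]
  rw [Fintype.sum_prod_type]
  have hstep1 : ∀ k : Fin m, ∑ l : Fin d,
      (((m:ℝ) * Lf) • (Jmat m ⊗ₖ (1 : Matrix (Fin d) (Fin d) ℝ))) p (k, l) * x (k, l)
      = (m:ℝ) * Lf * Jmat m p.1 k * x (k, p.2) := by
    intro k
    have : ∀ l : Fin d,
        (((m:ℝ) * Lf) • (Jmat m ⊗ₖ (1 : Matrix (Fin d) (Fin d) ℝ))) p (k, l) * x (k, l)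
        = if p.2 = l then (m:ℝ) * Lf * Jmat m p.1 k * x (k, l) else 0 := by
      intro l
      rw [Matrix.smul_apply, Matrix.kroneckerMap_apply, Matrix.one_apply]
      split_ifs with h
      · rw [smul_eq_mul]; ring
      · rw [smul_eq_mul]; ring
    rw [Finset.sum_congr rfl (fun l _ => this l), Finset.sum_ite_eq univ p.2
      (fun l => (m:ℝ) * Lf * Jmat m p.1 k * x (k, l))]
    simp
  rw [Finset.sum_congr rfl (fun k _ => hstep1 k)]
  have hstep2 : ∀ k : Fin m, (m:ℝ) * Lf * Jmat m p.1 k * x (k, p.2)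
      = (if k = (⟨p.1.val, by omega⟩ : Fin m) then -((m:ℝ) * Lf * x ((⟨p.1.val, by omega⟩ : Fin m), p.2)) else 0)
      + (if k = (⟨p.1.val + 1, by omega⟩ : Fin m) then (m:ℝ) * Lf * x ((⟨p.1.val + 1, by omega⟩ : Fin m), p.2) else 0) := by
    intro k
    unfold Jmat
    rw [Matrix.of_apply]
    have h1 := p.1.isLt
    rcases eq_or_ne (k.val) (p.1.val) with hk | hk
    · have hkk : k = (⟨p.1.val, by omega⟩ : Fin m) := Fin.ext hk
      rw [if_pos hk, if_pos hkk, if_neg (by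
        intro hcontra
        have := congrArg Fin.val hcontra
        simp at this
        omega), hkk]
      ring
    · rw [if_neg hk]
      rcases eq_or_ne (k.val) (p.1.val + 1) with hk2 | hk2
      · have hkk : k = (⟨p.1.val + 1, by omega⟩ : Fin m) := Fin.ext hk2
        rw [if_pos hk2, if_neg (by
          intro hcontra
          have := congrArg Fin.val hcontra
          simp at this
          omega), if_pos hkk, hkk]
        ring
      · rw [if_neg hk2, if_neg (fun hcontra => hk (by
          have := congrArg Fin.val hcontra
          simpa using this)), if_neg (fun hcontra => hk2 (by
          have := congrArg Fin.val hcontra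
          simpa using this))]
        ring
  rw [Finset.sum_congr rfl (fun k _ => hstep2 k), Finset.sum_add_distrib,
    Finset.sum_ite_eq' univ _ (fun k => -((m:ℝ) * Lf * x ((⟨p.1.val, by omega⟩ : Fin m), p.2))),
    Finset.sum_ite_eq' univ _ (fun k => (m:ℝ) * Lf * x ((⟨p.1.val + 1, by omega⟩ : Fin m), p.2))]
  simp only [Finset.mem_univ, if_true]
  ring

end AuxProof

set_option maxHeartbeats 2000000 in
/-- max{‖Hx‖, inf_γ ‖∇f₀(x) + Hᵀγ‖} ≥ (√m/2)·‖(1/m)·Σᵢ ∇fᵢ(x̄)‖,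
where x̄ = (1/m)·Σᵢ xᵢ. -/
theorem stmt_8 (Lf ε : ℝ) (hLf : 0 < Lf) (hε0 : 0 < ε) (hε1 : ε < 1)
    (m₁ m₂ : ℕ) (hm₁ : 2 ≤ m₁) (hm₂ : 1 ≤ m₂) (heven : Even (m₁ * m₂))
    (d : ℕ) (hd : 5 ≤ d) (hodd : Odd d)
    (x : EuclideanSpace ℝ (Fin (3 * m₁ * m₂) × Fin d))
    (xb : EuclideanSpace ℝ (Fin d))
    (hxb : xb = ((3 * m₁ * m₂ : ℝ))⁻¹ • ∑ i ∈ Finset.Icc 1 (3 * m₁ * m₂), blkN x i) :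
    Real.sqrt (3 * m₁ * m₂) / 2 *
        ‖((3 * m₁ * m₂ : ℝ))⁻¹ •
          ∑ i ∈ Finset.Icc 1 (3 * m₁ * m₂), gradient (ff (3 * m₁ * m₂) Lf ε i) xb‖ ≤
      max ‖mvec (Hmat (3 * m₁ * m₂) d Lf) x‖
        (⨅ γ : EuclideanSpace ℝ (Fin (3 * m₁ * m₂ - 1) × Fin d),
          ‖gradient (f0 (3 * m₁ * m₂) Lf ε) x + mvec (Hmat (3 * m₁ * m₂) d Lf)ᵀ γ‖) := by
  classical
  have hodd' : d % 2 = 1 := Nat.odd_iff.mp hodd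
  have hd5 : 5 ≤ d := hd
  have hd0 : 0 < d := by omega
  have hm6 : 6 ≤ 3 * m₁ * m₂ := by
    have h1 : 3 * 2 * 1 ≤ 3 * m₁ * m₂ := Nat.mul_le_mul (Nat.mul_le_mul_left 3 hm₁) hm₂
    simpa using h1
  have hm1 : 1 ≤ 3 * m₁ * m₂ := by omega
  have hM0 : (0:ℝ) < ((3 * m₁ * m₂ : ℕ):ℝ) := by exact_mod_cast (by omega : 0 < 3 * m₁ * m₂)
  have hMne : ((3 * m₁ * m₂ : ℕ):ℝ) ≠ 0 := ne_of_gt hM0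
  have hcast : (3:ℝ) * (m₁:ℝ) * (m₂:ℝ) = ((3 * m₁ * m₂ : ℕ):ℝ) := by push_cast; ring
  rw [hcast] at hxb ⊢
  set gg : ℕ → EuclideanSpace ℝ (Fin d) := fun i => Gff (3 * m₁ * m₂) Lf ε i hd0 (blkN x i) with hgg
  set GB : ℕ → EuclideanSpace ℝ (Fin d) := fun i => Gff (3 * m₁ * m₂) Lf ε i hd0 xb with hGB
  have hgrad_i : ∀ i, gradient (ff (3 * m₁ * m₂) Lf ε i) xb = GB i := fun i =>
    (hga_ff (3 * m₁ * m₂) Lf ε i hd5 hodd' xb).gradient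
  have hgradsum : ∑ i ∈ Finset.Icc 1 (3 * m₁ * m₂), gradient (ff (3 * m₁ * m₂) Lf ε i) xb
      = ∑ i ∈ Finset.Icc 1 (3 * m₁ * m₂), GB i :=
    Finset.sum_congr rfl fun i _ => hgrad_i i
  rw [hgradsum]
  have hgradf0 : gradient (f0 (3 * m₁ * m₂) Lf ε) x
      = ∑ i ∈ Finset.Icc 1 (3 * m₁ * m₂), emb (3 * m₁ * m₂) d i (gg i) :=
    (hga_f0 (3 * m₁ * m₂) Lf ε hd5 hodd' x).gradient
  simp only [hgradf0]
  set vb := ((3 * m₁ * m₂ : ℕ):ℝ)⁻¹ • ∑ i ∈ Finset.Icc 1 (3 * m₁ * m₂), GB i with hvb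
  set vbar := ((3 * m₁ * m₂ : ℕ):ℝ)⁻¹ • ∑ i ∈ Finset.Icc 1 (3 * m₁ * m₂), gg i with hvbar
  set A := ‖mvec (Hmat (3 * m₁ * m₂) d Lf) x‖ with hA_def
  set δ : EuclideanSpace ℝ (Fin (3 * m₁ * m₂) × Fin d) := WithLp.toLp 2 (fun p => x p - xb p.2) with hδ
  have hA0 : 0 ≤ A := norm_nonneg _
  have hsqM : Real.sqrt (3 * m₁ * m₂) * Real.sqrt (3 * m₁ * m₂) = ((3 * m₁ * m₂ : ℕ):ℝ) := by
    rw [← hcast]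
    exact Real.mul_self_sqrt (by positivity)
  have hsqM0 : 0 < Real.sqrt (3 * m₁ * m₂) := by
    apply Real.sqrt_pos.mpr
    rw [hcast]
    exact hM0
  -- coordinates of xb
  have hxbj : ∀ j : Fin d, xb j = ((3 * m₁ * m₂ : ℕ):ℝ)⁻¹ * ∑ k : Fin (3 * m₁ * m₂), x (k, j) := by
    intro j
    rw [hxb]
    have h1 : ((((3 * m₁ * m₂ : ℕ):ℝ))⁻¹ • ∑ i ∈ Finset.Icc 1 (3 * m₁ * m₂), blkN x i) j
        = ((3 * m₁ * m₂ : ℕ):ℝ)⁻¹ * (∑ i ∈ Finset.Icc 1 (3 * m₁ * m₂), blkN x i) j := rfl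
    rw [h1]
    congr 1
    rw [WithLp.ofLp_sum, Finset.sum_apply]
    exact sum_Icc_fin hm1 (fun k => x (k, j))
  -- S2 : lower bound for every γ
  have hB : ∀ γ : EuclideanSpace ℝ (Fin (3 * m₁ * m₂ - 1) × Fin d),
      Real.sqrt (3 * m₁ * m₂) * ‖vbar‖ ≤
        ‖(∑ i ∈ Finset.Icc 1 (3 * m₁ * m₂), emb (3 * m₁ * m₂) d i (gg i))
          + mvec (Hmat (3 * m₁ * m₂) d Lf)ᵀ γ‖ := by
    intro γ
    set u : EuclideanSpace ℝ (Fin (3 * m₁ * m₂) × Fin d) := WithLp.toLp 2 (fun p => vbar p.2) with hu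
    have hblk_u : ∀ i, 1 ≤ i → i ≤ 3 * m₁ * m₂ → blkN u i = vbar := by
      intro i hi1 hi2
      ext j
      show blkN u i j = vbar j
      unfold blkN
      simp only [WithLp.ofLp_toLp]
      rw [dif_pos ⟨hi1, by omega⟩]
    have hinner1 : (inner ℝ (∑ i ∈ Finset.Icc 1 (3 * m₁ * m₂), emb (3 * m₁ * m₂) d i (gg i)) u : ℝ)
        = ((3 * m₁ * m₂ : ℕ):ℝ) * ‖vbar‖^2 := by
      rw [sum_inner]
      have hterm : ∀ i ∈ Finset.Icc 1 (3 * m₁ * m₂),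
          (inner ℝ (emb (3 * m₁ * m₂) d i (gg i)) u : ℝ) = (inner ℝ (gg i) vbar : ℝ) := by
        intro i hi
        rw [Finset.mem_Icc] at hi
        rw [emb_inner (3 * m₁ * m₂) d i hi.1 (by omega), hblk_u i hi.1 hi.2]
      rw [Finset.sum_congr rfl hterm, ← sum_inner]
      have hsum : ∑ i ∈ Finset.Icc 1 (3 * m₁ * m₂), gg i = ((3 * m₁ * m₂ : ℕ):ℝ) • vbar := by
        rw [hvbar, smul_smul, mul_inv_cancel₀ hMne, one_smul]
      rw [hsum, real_inner_smul_left, real_inner_self_eq_norm_sq]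
    have hHu : mvec (Hmat (3 * m₁ * m₂) d Lf) u = 0 := by
      ext p
      show mvec (Hmat (3 * m₁ * m₂) d Lf) u p = 0
      rw [mvecH_apply (3 * m₁ * m₂) d Lf (by omega) u p]
      have e0 : ((3 * m₁ * m₂ : ℕ):ℝ) * Lf * (vbar p.2 - vbar p.2) = 0 := by
        rw [sub_self, mul_zero]
      exact e0
    have hinner2 : (inner ℝ (mvec (Hmat (3 * m₁ * m₂) d Lf)ᵀ γ) u : ℝ) = (0:ℝ) := by
      rw [mvec_transpose_inner, hHu]
      exact inner_zero_right γ
    have hutotal : (inner ℝ ((∑ i ∈ Finset.Icc 1 (3 * m₁ * m₂), emb (3 * m₁ * m₂) d i (gg i))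
        + mvec (Hmat (3 * m₁ * m₂) d Lf)ᵀ γ) u : ℝ)
        = ((3 * m₁ * m₂ : ℕ):ℝ) * ‖vbar‖^2 := by
      rw [inner_add_left, hinner1, hinner2, add_zero]
    have hunorm : ‖u‖ = Real.sqrt (3 * m₁ * m₂) * ‖vbar‖ := by
      have h1 : ‖u‖^2 = ((3 * m₁ * m₂ : ℕ):ℝ) * ‖vbar‖^2 := by
        rw [norm_sq_eq, norm_sq_eq, Fintype.sum_prod_type]
        have hconst : ∀ k : Fin (3 * m₁ * m₂), ∑ j : Fin d, u (k, j) ^ 2 = ∑ j : Fin d, vbar j ^ 2 :=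
          fun k => rfl
        rw [Finset.sum_congr rfl (fun k _ => hconst k), Finset.sum_const, Finset.card_univ,
          Fintype.card_fin, nsmul_eq_mul]
      calc ‖u‖ = Real.sqrt (‖u‖^2) := (Real.sqrt_sq (norm_nonneg u)).symm
        _ = Real.sqrt (((3 * m₁ * m₂ : ℕ):ℝ) * ‖vbar‖^2) := by rw [h1]
        _ = Real.sqrt (3 * m₁ * m₂) * ‖vbar‖ := by
            rw [Real.sqrt_mul hM0.le, Real.sqrt_sq (norm_nonneg _), hcast]
    rcases eq_or_lt_of_le (norm_nonneg vbar) with h0 | h0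
    · rw [← h0, mul_zero]
      exact norm_nonneg _
    · have hCS := real_inner_le_norm
        ((∑ i ∈ Finset.Icc 1 (3 * m₁ * m₂), emb (3 * m₁ * m₂) d i (gg i))
          + mvec (Hmat (3 * m₁ * m₂) d Lf)ᵀ γ) u
      rw [hutotal, hunorm] at hCS
      rw [← hsqM] at hCS
      nlinarith [mul_pos hsqM0 h0,
        norm_nonneg ((∑ i ∈ Finset.Icc 1 (3 * m₁ * m₂), emb (3 * m₁ * m₂) d i (gg i))
          + mvec (Hmat (3 * m₁ * m₂) d Lf)ᵀ γ)]
  -- S4 : A bound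
  have hAbound : Lf * ‖δ‖ ≤ A := by
    have hA2 : A^2 = ∑ j : Fin d, ∑ i : Fin (3 * m₁ * m₂ - 1),
        (((3 * m₁ * m₂ : ℕ):ℝ) * Lf * (x (⟨i.val+1, by omega⟩, j) - x (⟨i.val, by omega⟩, j)))^2 := by
      rw [hA_def, norm_sq_eq, Fintype.sum_prod_type, Finset.sum_comm]
      exact Finset.sum_congr rfl fun j _ => Finset.sum_congr rfl fun i _ => by
        rw [mvecH_apply (3 * m₁ * m₂) d Lf (by omega) x (i, j)]
    have hδ2 : ‖δ‖^2 = ∑ j : Fin d, ∑ k : Fin (3 * m₁ * m₂),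
        (x (k,j) - ((3 * m₁ * m₂ : ℕ):ℝ)⁻¹ * ∑ k' : Fin (3 * m₁ * m₂), x (k',j))^2 := by
      rw [norm_sq_eq, Fintype.sum_prod_type, Finset.sum_comm]
      refine Finset.sum_congr rfl fun j _ => Finset.sum_congr rfl fun k _ => ?_
      have hδkj : δ (k, j) = x (k, j) - xb j := rfl
      rw [hδkj, hxbj j]
    have hperj : ∀ j : Fin d, ∑ k : Fin (3 * m₁ * m₂),
        (x (k,j) - ((3 * m₁ * m₂ : ℕ):ℝ)⁻¹ * ∑ k' : Fin (3 * m₁ * m₂), x (k',j))^2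
        ≤ ((3 * m₁ * m₂ : ℕ):ℝ)^2 * ∑ i : Fin (3 * m₁ * m₂ - 1),
            (x (⟨i.val+1, by omega⟩, j) - x (⟨i.val, by omega⟩, j))^2 := by
      intro j
      have h1 := avg_dev hm1 (fun k : Fin (3 * m₁ * m₂) => x (k, j))
      have h2 : ∑ t ∈ Finset.range (3 * m₁ * m₂ - 1),
          ((if h : t + 1 < 3 * m₁ * m₂ then x (⟨t + 1, h⟩, j) else 0)
            - (if h : t < 3 * m₁ * m₂ then x (⟨t, h⟩, j) else 0)) ^ 2
          = ∑ i : Fin (3 * m₁ * m₂ - 1),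
              (x (⟨i.val+1, by omega⟩, j) - x (⟨i.val, by omega⟩, j))^2 := by
        rw [← Fin.sum_univ_eq_sum_range]
        refine Finset.sum_congr rfl fun i _ => ?_
        have hi1 : i.val + 1 < 3 * m₁ * m₂ := by omega
        have hi2 : i.val < 3 * m₁ * m₂ := by omega
        rw [dif_pos hi1, dif_pos hi2]
      rw [← h2]
      exact h1
    have hsq : Lf^2 * ‖δ‖^2 ≤ A^2 := by
      rw [hA2, hδ2]
      have hstep : ∀ j : Fin d, Lf^2 * ∑ k : Fin (3 * m₁ * m₂),
          (x (k,j) - ((3 * m₁ * m₂ : ℕ):ℝ)⁻¹ * ∑ k' : Fin (3 * m₁ * m₂), x (k',j))^2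
          ≤ ∑ i : Fin (3 * m₁ * m₂ - 1),
              (((3 * m₁ * m₂ : ℕ):ℝ) * Lf * (x (⟨i.val+1, by omega⟩, j) - x (⟨i.val, by omega⟩, j)))^2 := by
        intro j
        have h3 : ∑ i : Fin (3 * m₁ * m₂ - 1),
            (((3 * m₁ * m₂ : ℕ):ℝ) * Lf * (x (⟨i.val+1, by omega⟩, j) - x (⟨i.val, by omega⟩, j)))^2
            = Lf^2 * (((3 * m₁ * m₂ : ℕ):ℝ)^2 * ∑ i : Fin (3 * m₁ * m₂ - 1),
                (x (⟨i.val+1, by omega⟩, j) - x (⟨i.val, by omega⟩, j))^2) := by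
          rw [Finset.mul_sum, Finset.mul_sum]
          exact Finset.sum_congr rfl fun i _ => by ring
        rw [h3]
        exact mul_le_mul_of_nonneg_left (hperj j) (sq_nonneg Lf)
      calc Lf^2 * ∑ j : Fin d, ∑ k : Fin (3 * m₁ * m₂),
            (x (k,j) - ((3 * m₁ * m₂ : ℕ):ℝ)⁻¹ * ∑ k' : Fin (3 * m₁ * m₂), x (k',j))^2
          = ∑ j : Fin d, Lf^2 * ∑ k : Fin (3 * m₁ * m₂),
              (x (k,j) - ((3 * m₁ * m₂ : ℕ):ℝ)⁻¹ * ∑ k' : Fin (3 * m₁ * m₂), x (k',j))^2 := by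
            rw [Finset.mul_sum]
        _ ≤ ∑ j : Fin d, ∑ i : Fin (3 * m₁ * m₂ - 1),
              (((3 * m₁ * m₂ : ℕ):ℝ) * Lf * (x (⟨i.val+1, by omega⟩, j) - x (⟨i.val, by omega⟩, j)))^2 :=
            Finset.sum_le_sum fun j _ => hstep j
    have hLd0 : 0 ≤ Lf * ‖δ‖ := mul_nonneg hLf.le (norm_nonneg _)
    have h5 : (Lf * ‖δ‖)^2 ≤ A^2 := by nlinarith
    have h6 := Real.sqrt_le_sqrt h5
    rwa [Real.sqrt_sq hLd0, Real.sqrt_sq hA0] at h6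
  -- S5 : gap bound
  have hgap : Real.sqrt (3 * m₁ * m₂) * ‖vb - vbar‖ ≤ Lf * ‖δ‖ := by
    have hdiff : vb - vbar = ((3 * m₁ * m₂ : ℕ):ℝ)⁻¹ • ∑ i ∈ Finset.Icc 1 (3 * m₁ * m₂), (GB i - gg i) := by
      rw [hvb, hvbar, ← smul_sub, Finset.sum_sub_distrib]
    have hterm : ∀ i ∈ Finset.Icc 1 (3 * m₁ * m₂), ‖GB i - gg i‖ ≤ Lf * ‖xb - blkN x i‖ :=
      fun i _ => Gff_lip (3 * m₁ * m₂) Lf ε i hd0 hd5 hodd' hm1 hLf hε0 xb (blkN x i)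
    have hsumnorm : ‖∑ i ∈ Finset.Icc 1 (3 * m₁ * m₂), (GB i - gg i)‖
        ≤ Lf * ∑ i ∈ Finset.Icc 1 (3 * m₁ * m₂), ‖xb - blkN x i‖ := by
      refine le_trans (norm_sum_le _ _) ?_
      rw [Finset.mul_sum]
      exact Finset.sum_le_sum hterm
    have h2 : ∑ i ∈ Finset.Icc 1 (3 * m₁ * m₂), ‖xb - blkN x i‖^2 = ‖δ‖^2 := by
      have h3 : ∀ i ∈ Finset.Icc 1 (3 * m₁ * m₂), ‖xb - blkN x i‖^2
          = (if h : 1 ≤ i ∧ i - 1 < 3 * m₁ * m₂ then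
              (fun k : Fin (3 * m₁ * m₂) => ∑ j : Fin d, (x (k,j) - xb j)^2) ⟨i-1,h.2⟩ else 0) := by
        intro i hi
        rw [Finset.mem_Icc] at hi
        rw [dif_pos ⟨hi.1, (by omega : i - 1 < 3 * m₁ * m₂)⟩, norm_sq_eq]
        refine Finset.sum_congr rfl fun j _ => ?_
        have h4 : (xb - blkN x i) j = xb j - blkN x i j := rfl
        have h5 : blkN x i j = x (⟨i-1, (by omega : i - 1 < 3 * m₁ * m₂)⟩, j) := by
          unfold blkN
          simp only [WithLp.ofLp_toLp]
          rw [dif_pos ⟨hi.1, (by omega : i - 1 < 3 * m₁ * m₂)⟩]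
        rw [h4, h5]
        ring
      rw [Finset.sum_congr rfl h3,
        sum_Icc_fin hm1 (fun k : Fin (3 * m₁ * m₂) => ∑ j : Fin d, (x (k,j) - xb j)^2),
        norm_sq_eq, Fintype.sum_prod_type]
    have hcard : (((Finset.Icc 1 (3 * m₁ * m₂)).card : ℕ) : ℝ) = ((3 * m₁ * m₂ : ℕ):ℝ) := by
      rw [Nat.card_Icc]
      simp
    have hsq_sum : (∑ i ∈ Finset.Icc 1 (3 * m₁ * m₂), ‖xb - blkN x i‖)^2
        ≤ ((3 * m₁ * m₂ : ℕ):ℝ) * ‖δ‖^2 := by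
      have h1 := sq_sum_le_card_mul_sum_sq (s := Finset.Icc 1 (3 * m₁ * m₂))
        (f := fun i => ‖xb - blkN x i‖)
      rw [h2] at h1
      calc (∑ i ∈ Finset.Icc 1 (3 * m₁ * m₂), ‖xb - blkN x i‖)^2
          ≤ ((Finset.Icc 1 (3 * m₁ * m₂)).card : ℝ) * ‖δ‖^2 := h1
        _ = ((3 * m₁ * m₂ : ℕ):ℝ) * ‖δ‖^2 := by rw [hcard]
    have hsum_le : ∑ i ∈ Finset.Icc 1 (3 * m₁ * m₂), ‖xb - blkN x i‖
        ≤ Real.sqrt (3 * m₁ * m₂) * ‖δ‖ := by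
      have hnn : 0 ≤ ∑ i ∈ Finset.Icc 1 (3 * m₁ * m₂), ‖xb - blkN x i‖ :=
        Finset.sum_nonneg fun i _ => norm_nonneg _
      have hb : (∑ i ∈ Finset.Icc 1 (3 * m₁ * m₂), ‖xb - blkN x i‖)^2
          ≤ (Real.sqrt (3 * m₁ * m₂) * ‖δ‖)^2 := by
        have hexp : (Real.sqrt (3 * m₁ * m₂) * ‖δ‖)^2
            = (Real.sqrt (3 * m₁ * m₂) * Real.sqrt (3 * m₁ * m₂)) * ‖δ‖^2 := by ring
        rw [hexp, hsqM]
        exact hsq_sum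
      have hs := Real.sqrt_le_sqrt hb
      rwa [Real.sqrt_sq hnn, Real.sqrt_sq (mul_nonneg hsqM0.le (norm_nonneg _))] at hs
    have hnorm_diff : ‖vb - vbar‖
        ≤ ((3 * m₁ * m₂ : ℕ):ℝ)⁻¹ * (Lf * (Real.sqrt (3 * m₁ * m₂) * ‖δ‖)) := by
      rw [hdiff, norm_smul, Real.norm_eq_abs, abs_of_pos (by positivity : (0:ℝ) < ((3 * m₁ * m₂ : ℕ):ℝ)⁻¹)]
      have hmid := le_trans hsumnorm (mul_le_mul_of_nonneg_left hsum_le hLf.le)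
      exact mul_le_mul_of_nonneg_left hmid (by positivity)
    calc Real.sqrt (3 * m₁ * m₂) * ‖vb - vbar‖
        ≤ Real.sqrt (3 * m₁ * m₂) * (((3 * m₁ * m₂ : ℕ):ℝ)⁻¹ * (Lf * (Real.sqrt (3 * m₁ * m₂) * ‖δ‖))) :=
          mul_le_mul_of_nonneg_left hnorm_diff hsqM0.le
      _ = (Real.sqrt (3 * m₁ * m₂) * Real.sqrt (3 * m₁ * m₂)) * ((3 * m₁ * m₂ : ℕ):ℝ)⁻¹ * (Lf * ‖δ‖) := by
          ring
      _ = Lf * ‖δ‖ := by rw [hsqM, mul_inv_cancel₀ hMne, one_mul]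
  -- final assembly
  have hBle : Real.sqrt (3 * m₁ * m₂) * ‖vbar‖
      ≤ ⨅ γ : EuclideanSpace ℝ (Fin (3 * m₁ * m₂ - 1) × Fin d),
          ‖(∑ i ∈ Finset.Icc 1 (3 * m₁ * m₂), emb (3 * m₁ * m₂) d i (gg i))
            + mvec (Hmat (3 * m₁ * m₂) d Lf)ᵀ γ‖ :=
    le_ciInf hB
  have htri : ‖vb‖ ≤ ‖vbar‖ + ‖vb - vbar‖ := by
    have h := norm_add_le vbar (vb - vbar)
    simpa using h
  set B := ⨅ γ : EuclideanSpace ℝ (Fin (3 * m₁ * m₂ - 1) × Fin d),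
      ‖(∑ i ∈ Finset.Icc 1 (3 * m₁ * m₂), emb (3 * m₁ * m₂) d i (gg i))
        + mvec (Hmat (3 * m₁ * m₂) d Lf)ᵀ γ‖ with hBdef
  have h1 : Real.sqrt (3 * m₁ * m₂) * ‖vb‖ ≤ B + A := by
    have h2 : Real.sqrt (3 * m₁ * m₂) * ‖vb‖
        ≤ Real.sqrt (3 * m₁ * m₂) * ‖vbar‖ + Real.sqrt (3 * m₁ * m₂) * ‖vb - vbar‖ := by
      rw [← mul_add]
      exact mul_le_mul_of_nonneg_left htri hsqM0.le
    have h3 : Real.sqrt (3 * m₁ * m₂) * ‖vb - vbar‖ ≤ A := le_trans hgap hAbound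
    linarith
  have h4 : B ≤ max A B := le_max_right _ _
  have h5 : A ≤ max A B := le_max_left _ _
  have hvbn : 0 ≤ ‖vb‖ := norm_nonneg _
  have hgoal : Real.sqrt ((3 * m₁ * m₂ : ℕ):ℝ) / 2 * ‖vb‖
      = (Real.sqrt ((3 * m₁ * m₂ : ℕ):ℝ) * ‖vb‖) / 2 := by ring
  rw [hgoal]
  have hsq_eq : Real.sqrt ((3 * m₁ * m₂ : ℕ):ℝ) = Real.sqrt (3 * (m₁:ℝ) * (m₂:ℝ)) := by
    rw [hcast]
  rw [hsq_eq]
  linarith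
end
end

section
/- Let j̄ ∈ {1,…,d̄} and let z ∈ ℝ^{d̄} satisfy supp(z) ⊆ {1,…,j̄−1}. Then: (1) if j̄ = 1, then z = 0 and supp(∇f_i(z)) ⊆ {1} for all i = 1,…,m; (2) if j̄ is even, then supp(∇f_i(z)) ⊆ {1,…,j̄} for 1 ≤ i ≤ m/3 and supp(∇f_i(z)) ⊆ {1,…,j̄−1} for m/3 < i ≤ m; (3) if j̄ is odd and j̄ ≠ 1, then supp(∇f_i(z)) ⊆ {1,…,j̄−1} for 1 ≤ i ≤ 2m/3 and supp(∇f_i(z)) ⊆ {1,…,j̄} for 2m/3 < i ≤ m. -/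
open Real Matrix Finset
open scoped Kronecker

noncomputable section

namespace Stmt10Aux

def Psi' (u : ℝ) : ℝ := if u ≤ 0 then 0 else 2 * u * Real.exp (-u ^ 2)

lemma Psi_zero : Psi 0 = 0 := if_pos le_rfl
lemma Psi'_zero : Psi' 0 = 0 := if_pos le_rfl

lemma Psi_abs_le (u : ℝ) : |Psi u| ≤ u ^ 2 := by
  unfold Psi
  split_ifs with h
  · simpa using sq_nonneg u
  · rw [abs_of_nonneg (by nlinarith [Real.exp_le_one_iff.2 (by nlinarith : -u^2 ≤ 0)])]
    nlinarith [Real.add_one_le_exp (-u^2)]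

lemma hasDerivAt_Psi (u : ℝ) : HasDerivAt Psi (Psi' u) u := by
  rcases lt_trichotomy u 0 with h | h | h
  · have : Psi' u = 0 := if_pos h.le
    rw [this]
    apply (hasDerivAt_const u (0:ℝ)).congr_of_eventuallyEq
    filter_upwards [Iio_mem_nhds h] with v hv
    exact if_pos (le_of_lt hv)
  · subst h
    rw [Psi'_zero]
    rw [hasDerivAt_iff_isLittleO]
    simp only [Psi_zero, smul_zero, sub_zero]
    rw [Asymptotics.isLittleO_iff]
    intro c hc
    filter_upwards [Metric.ball_mem_nhds (0:ℝ) hc] with v hv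
    simp only [Metric.mem_ball, Real.dist_eq, sub_zero] at hv
    calc ‖Psi v‖ ≤ v ^ 2 := Psi_abs_le v
    _ = |v| * |v| := by rw [abs_mul_abs_self, sq]
    _ ≤ c * ‖v‖ := by
        apply mul_le_mul hv.le le_rfl (abs_nonneg v) hc.le
  · have hD : HasDerivAt (fun v : ℝ => 1 - Real.exp (-v ^ 2)) (Psi' u) u := by
      have h1 : HasDerivAt (fun v : ℝ => -v ^ 2) (-(2 * u ^ 1)) u := (hasDerivAt_pow 2 u).neg
      have h2 := h1.exp
      have h3 := h2.const_sub 1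
      refine h3.congr_deriv ?_
      rw [Psi', if_neg (not_le.2 h)]
      ring
    apply hD.congr_of_eventuallyEq
    filter_upwards [Ioi_mem_nhds h] with v hv
    exact if_neg (not_le.2 hv)

lemma differentiable_Psi : Differentiable ℝ Psi := fun u => (hasDerivAt_Psi u).differentiableAt

lemma hasDerivAt_Phi (v : ℝ) : HasDerivAt Phi (4 * (1 / (1 + v ^ 2))) v := by
  have := ((hasDerivAt_arctan v).const_mul 4).add_const (2 * π)
  exact this

lemma differentiable_Phi : Differentiable ℝ Phi := fun v => (hasDerivAt_Phi v).differentiableAt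

lemma zc_smul {d : ℕ} (σ : ℝ) (z : EuclideanSpace ℝ (Fin d)) (J : ℕ) :
    zc (σ • z) J = σ * zc z J := by
  unfold zc
  split_ifs with h
  · rfl
  · rw [mul_zero]

lemma differentiable_zc {d : ℕ} (J : ℕ) :
    Differentiable ℝ (fun z : EuclideanSpace ℝ (Fin d) => zc z J) := by
  unfold zc
  by_cases h : 1 ≤ J ∧ J - 1 < d
  · simp only [dif_pos h]
    exact (EuclideanSpace.proj (⟨J - 1, h.2⟩ : Fin d) :
      EuclideanSpace ℝ (Fin d) →L[ℝ] ℝ).differentiable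
  · simp only [dif_neg h]
    exact differentiable_const 0

lemma differentiable_phi {d : ℕ} (jj : ℕ) :
    Differentiable ℝ (fun z : EuclideanSpace ℝ (Fin d) => phi z jj) := by
  unfold phi
  by_cases h : jj = 1
  · simp only [if_pos h]
    exact ((differentiable_const (Psi 1)).mul
      (differentiable_Phi.comp (differentiable_zc 1))).neg
  · simp only [if_neg h]
    exact ((differentiable_Psi.comp (differentiable_zc (jj - 1)).neg).mul
        (differentiable_Phi.comp (differentiable_zc jj).neg)).sub
      ((differentiable_Psi.comp (differentiable_zc (jj - 1))).mul
        (differentiable_Phi.comp (differentiable_zc jj)))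

lemma zc_line {d : ℕ} (z : EuclideanSpace ℝ (Fin d)) (k : Fin d) (J : ℕ) (t : ℝ) :
    zc (z + t • EuclideanSpace.single k 1) J
      = zc z J + t * (if J = k.val + 1 then 1 else 0) := by
  unfold zc
  by_cases h : 1 ≤ J ∧ J - 1 < d
  · simp only [dif_pos h]
    have he : (z + t • EuclideanSpace.single k (1:ℝ)) ⟨J - 1, h.2⟩
        = z ⟨J - 1, h.2⟩ + t * (EuclideanSpace.single k (1:ℝ)) ⟨J - 1, h.2⟩ := rfl
    rw [he, EuclideanSpace.single_apply]
    have hiff : ((⟨J - 1, h.2⟩ : Fin d) = k) ↔ J = k.val + 1 := by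
      rw [Fin.ext_iff]
      show J - 1 = k.val ↔ _
      omega
    by_cases hK : J = k.val + 1
    · rw [if_pos (hiff.2 hK), if_pos hK]
    · rw [if_neg (fun hh => hK (hiff.1 hh)), if_neg hK]
  · simp only [dif_neg h]
    rw [if_neg, mul_zero, add_zero]
    intro hK
    exact h ⟨by omega, by omega⟩

lemma hasDerivAt_affine (a δ : ℝ) : HasDerivAt (fun t : ℝ => a + t * δ) δ 0 := by
  simpa using (hasDerivAt_mul_const δ).const_add (x := (0:ℝ)) a

lemma line_term (a b δ₁ δ₂ : ℝ) :
    HasDerivAt (fun t : ℝ =>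
        Psi (-(a + t * δ₁)) * Phi (-(b + t * δ₂)) - Psi (a + t * δ₁) * Phi (b + t * δ₂))
      (Psi' (-a) * (-δ₁) * Phi (-b) + Psi (-a) * (4 * (1 / (1 + (-b) ^ 2)) * (-δ₂))
        - (Psi' a * δ₁ * Phi b + Psi a * (4 * (1 / (1 + b ^ 2)) * δ₂))) 0 := by
  have hA := hasDerivAt_affine a δ₁
  have hB := hasDerivAt_affine b δ₂
  have hPsiA : HasDerivAt (fun t : ℝ => Psi (a + t * δ₁)) (Psi' a * δ₁) 0 := by
    simpa [Function.comp_def] using (hasDerivAt_Psi (a + 0 * δ₁)).comp 0 hA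
  have hPsiNA : HasDerivAt (fun t : ℝ => Psi (-(a + t * δ₁))) (Psi' (-a) * (-δ₁)) 0 := by
    simpa [Function.comp_def] using (hasDerivAt_Psi (-(a + 0 * δ₁))).comp 0 hA.fun_neg
  have hPhiB : HasDerivAt (fun t : ℝ => Phi (b + t * δ₂)) (4 * (1 / (1 + b ^ 2)) * δ₂) 0 := by
    simpa [Function.comp_def] using (hasDerivAt_Phi (b + 0 * δ₂)).comp 0 hB
  have hPhiNB : HasDerivAt (fun t : ℝ => Phi (-(b + t * δ₂)))
      (4 * (1 / (1 + (-b) ^ 2)) * (-δ₂)) 0 := by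
    simpa [Function.comp_def] using (hasDerivAt_Phi (-(b + 0 * δ₂))).comp 0 hB.fun_neg
  have h1 := hPsiNA.mul hPhiNB
  have h2 := hPsiA.mul hPhiB
  have := h1.sub h2
  refine this.congr_deriv ?_
  norm_num

lemma phi_line_zero {d : ℕ} (z : EuclideanSpace ℝ (Fin d)) (k : Fin d) (jj : ℕ)
    (h2 : 2 ≤ jj)
    (ha : zc z (jj - 1) = 0 ∨ (¬ jj - 1 = k.val + 1 ∧ ¬ jj = k.val + 1)) :
    HasDerivAt (fun t : ℝ => phi (z + t • EuclideanSpace.single k 1) jj) 0 0 := by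
  have hne : ¬ jj = 1 := by omega
  have hfe : (fun t : ℝ => phi (z + t • EuclideanSpace.single k 1) jj)
      = fun t : ℝ =>
        Psi (-(zc z (jj - 1) + t * (if jj - 1 = k.val + 1 then (1:ℝ) else 0)))
          * Phi (-(zc z jj + t * (if jj = k.val + 1 then (1:ℝ) else 0)))
        - Psi (zc z (jj - 1) + t * (if jj - 1 = k.val + 1 then (1:ℝ) else 0))
          * Phi (zc z jj + t * (if jj = k.val + 1 then (1:ℝ) else 0)) := by
    funext t
    rw [phi, if_neg hne, zc_line, zc_line]
  rw [hfe]
  rcases ha with ha | ⟨hb1, hb2⟩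
  · rw [ha]
    have := line_term 0 (zc z jj) (if jj - 1 = k.val + 1 then (1:ℝ) else 0)
      (if jj = k.val + 1 then (1:ℝ) else 0)
    simpa [Psi_zero, Psi'_zero] using this
  · rw [if_neg hb1, if_neg hb2]
    have := line_term (zc z (jj - 1)) (zc z jj) 0 0
    simpa using this

lemma phi1_line_zero {d : ℕ} (z : EuclideanSpace ℝ (Fin d)) (k : Fin d)
    (hk : ¬ k.val + 1 = 1) :
    HasDerivAt (fun t : ℝ => phi (z + t • EuclideanSpace.single k 1) 1) 0 0 := by
  have hfe : (fun t : ℝ => phi (z + t • EuclideanSpace.single k 1) 1)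
      = fun _ : ℝ => -(Psi 1 * Phi (zc z 1)) := by
    funext t
    rw [phi, if_pos rfl, zc_line, if_neg (by omega : ¬ (1 = k.val + 1)), mul_zero, add_zero]
  rw [hfe]
  exact hasDerivAt_const _ _

lemma gradient_coord_eq_zero {d : ℕ} (f : EuclideanSpace ℝ (Fin d) → ℝ)
    (z : EuclideanSpace ℝ (Fin d)) (k : Fin d)
    (hdiff : DifferentiableAt ℝ f z)
    (hline : HasDerivAt (fun t : ℝ => f (z + t • EuclideanSpace.single k 1)) 0 0) :
    gradient f z k = 0 := by
  have hv : HasDerivAt (fun t : ℝ => z + t • EuclideanSpace.single k (1:ℝ))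
      (EuclideanSpace.single k 1) 0 := by
    simpa using ((hasDerivAt_id (0:ℝ)).smul_const (EuclideanSpace.single k (1:ℝ))).const_add z
  have hf0 : HasFDerivAt f (fderiv ℝ f z) (z + (0:ℝ) • EuclideanSpace.single k (1:ℝ)) := by
    simpa using hdiff.hasFDerivAt
  have hfull : HasDerivAt (fun t : ℝ => f (z + t • EuclideanSpace.single k 1))
      (fderiv ℝ f z (EuclideanSpace.single k 1)) 0 := hf0.comp_hasDerivAt 0 hv
  have hzero : fderiv ℝ f z (EuclideanSpace.single k 1) = 0 := hfull.unique hline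
  have h1 : (inner ℝ (gradient f z) (EuclideanSpace.single k (1:ℝ)) : ℝ)
      = fderiv ℝ f z (EuclideanSpace.single k 1) := by
    rw [gradient]
    exact InnerProductSpace.toDual_symm_apply
  rw [EuclideanSpace.inner_single_right] at h1
  simp only [starRingEnd_apply, star_trivial, one_mul] at h1
  rw [h1, hzero]

lemma grad_zero_B {d : ℕ} (c σ : ℝ) (z : EuclideanSpace ℝ (Fin d)) (k : Fin d)
    (hk : ¬ k.val + 1 = 1) :
    gradient (fun w : EuclideanSpace ℝ (Fin d) => c * phi (σ • w) 1) z k = 0 := by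
  apply gradient_coord_eq_zero
  · exact (((differentiable_phi 1).comp (differentiable_id.const_smul σ)).const_mul c) z
  · have heq : (fun t : ℝ => c * phi (σ • (z + t • EuclideanSpace.single k 1)) 1)
        = fun t : ℝ => c * phi (σ • z + (σ * t) • EuclideanSpace.single k 1) 1 := by
      funext t
      rw [smul_add, smul_smul]
    rw [heq]
    have hmul : HasDerivAt (fun t : ℝ => σ * t) σ 0 := by
      simpa using (hasDerivAt_id (0:ℝ)).const_mul σ
    have h1 : HasDerivAt (fun u : ℝ => phi (σ • z + u • EuclideanSpace.single k 1) 1) 0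
        (σ * 0) := by
      rw [mul_zero]
      exact phi1_line_zero (σ • z) k hk
    have := (h1.comp 0 hmul).const_mul c
    simpa [Function.comp] using this

lemma grad_zero_A {d : ℕ} (c σ : ℝ) (g : ℕ → ℕ) (S : Finset ℕ)
    (hg : ∀ j ∈ S, 2 ≤ g j)
    (z : EuclideanSpace ℝ (Fin d)) (k : Fin d) (hk : ¬ k.val + 1 = 1)
    (H : ∀ j ∈ S, zc (σ • z) (g j - 1) = 0
      ∨ (¬ g j - 1 = k.val + 1 ∧ ¬ g j = k.val + 1)) :
    gradient (fun w : EuclideanSpace ℝ (Fin d) =>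
      c * (phi (σ • w) 1 + 3 * ∑ j ∈ S, phi (σ • w) (g j))) z k = 0 := by
  apply gradient_coord_eq_zero
  · have hsm : Differentiable ℝ (fun w : EuclideanSpace ℝ (Fin d) => σ • w) :=
      differentiable_id.const_smul σ
    have h1 : Differentiable ℝ (fun w : EuclideanSpace ℝ (Fin d) => phi (σ • w) 1) :=
      (differentiable_phi 1).comp hsm
    have h2 : Differentiable ℝ
        (fun w : EuclideanSpace ℝ (Fin d) => ∑ j ∈ S, phi (σ • w) (g j)) :=
      Differentiable.fun_sum fun j _ => (differentiable_phi (g j)).comp hsm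
    exact ((h1.add (h2.const_mul 3)).const_mul c) z
  · have heq : (fun t : ℝ =>
        c * (phi (σ • (z + t • EuclideanSpace.single k 1)) 1
          + 3 * ∑ j ∈ S, phi (σ • (z + t • EuclideanSpace.single k 1)) (g j)))
        = fun t : ℝ =>
        c * (phi (σ • z + (σ * t) • EuclideanSpace.single k 1) 1
          + 3 * ∑ j ∈ S, phi (σ • z + (σ * t) • EuclideanSpace.single k 1) (g j)) := by
      funext t
      rw [smul_add, smul_smul]
    rw [heq]
    have hmul : HasDerivAt (fun t : ℝ => σ * t) σ 0 := by
      simpa using (hasDerivAt_id (0:ℝ)).const_mul σ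
    have hsum : HasDerivAt (fun u : ℝ =>
        ∑ j ∈ S, phi (σ • z + u • EuclideanSpace.single k 1) (g j)) 0 0 := by
      have := HasDerivAt.fun_sum
        (fun j hj => phi_line_zero (σ • z) k (g j) (hg j hj) (H j hj))
      simpa using this
    have h1 : HasDerivAt (fun u : ℝ =>
        phi (σ • z + u • EuclideanSpace.single k 1) 1
          + 3 * ∑ j ∈ S, phi (σ • z + u • EuclideanSpace.single k 1) (g j)) 0 (σ * 0) := by
      rw [mul_zero]
      simpa using (phi1_line_zero (σ • z) k hk).fun_add (hsum.const_mul 3)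
    have := (h1.comp 0 hmul).const_mul c
    simpa [Function.comp] using this

end Stmt10Aux

/-- Support propagation of ∇f_i: if supp(z) ⊆ {1,…,j̄−1} then the support of ∇fᵢ(z)
grows by at most one coordinate, depending on the parity of j̄ and the group of i. -/
theorem stmt_10 (Lf ε : ℝ) (hLf : 0 < Lf) (hε0 : 0 < ε) (hε1 : ε < 1)
    (m₁ m₂ : ℕ) (hm₁ : 2 ≤ m₁) (hm₂ : 1 ≤ m₂) (heven : Even (m₁ * m₂))
    (d : ℕ) (hd : 5 ≤ d) (hodd : Odd d)
    (jb : ℕ) (hjb1 : 1 ≤ jb) (hjbd : jb ≤ d)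
    (z : EuclideanSpace ℝ (Fin d)) (hz : suppSub z (jb - 1)) :
    (jb = 1 → z = 0 ∧ ∀ i, 1 ≤ i → i ≤ 3 * m₁ * m₂ →
      suppSub (gradient (ff (3 * m₁ * m₂) Lf ε i) z) 1) ∧
    (Even jb →
      (∀ i, 1 ≤ i → i ≤ m₁ * m₂ →
        suppSub (gradient (ff (3 * m₁ * m₂) Lf ε i) z) jb) ∧
      (∀ i, m₁ * m₂ < i → i ≤ 3 * m₁ * m₂ →
        suppSub (gradient (ff (3 * m₁ * m₂) Lf ε i) z) (jb - 1))) ∧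
    (Odd jb → jb ≠ 1 →
      (∀ i, 1 ≤ i → i ≤ 2 * (m₁ * m₂) →
        suppSub (gradient (ff (3 * m₁ * m₂) Lf ε i) z) (jb - 1)) ∧
      (∀ i, 2 * (m₁ * m₂) < i → i ≤ 3 * m₁ * m₂ →
        suppSub (gradient (ff (3 * m₁ * m₂) Lf ε i) z) jb)) := by
  classical
  have hm3 : 3 * m₁ * m₂ / 3 = m₁ * m₂ := by
    rw [mul_assoc]
    exact Nat.mul_div_cancel_left _ (by norm_num)
  have hm23 : 2 * (3 * m₁ * m₂) / 3 = 2 * (m₁ * m₂) := by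
    rw [show 2 * (3 * m₁ * m₂) = 3 * (2 * (m₁ * m₂)) by ring]
    exact Nat.mul_div_cancel_left _ (by norm_num)
  have hzc : ∀ J, jb ≤ J → zc z J = 0 := by
    intro J hJ
    unfold zc
    split_ifs with h
    · by_contra hne
      have h2 := hz ⟨J - 1, h.2⟩ hne
      have h3 : J - 1 + 1 ≤ jb - 1 := h2
      omega
    · rfl
  have hzcs : ∀ (σ : ℝ) (J : ℕ), jb ≤ J → zc (σ • z) J = 0 := by
    intro σ J hJ
    rw [Stmt10Aux.zc_smul, hzc J hJ, mul_zero]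
  have hffA : ∀ i : ℕ, i ≤ m₁ * m₂ →
      (ff (3 * m₁ * m₂) Lf ε i : EuclideanSpace ℝ (Fin d) → ℝ)
        = fun w => 300 * π * ε ^ 2 / ((3 * m₁ * m₂ : ℕ) * Lf) *
            (phi ((Real.sqrt (3 * m₁ * m₂ : ℕ) * Lf / (150 * π * ε)) • w) 1
              + 3 * ∑ j ∈ Finset.Icc 1 (d / 2),
                  phi ((Real.sqrt (3 * m₁ * m₂ : ℕ) * Lf / (150 * π * ε)) • w) (2 * j)) := by
    intro i hi
    funext w
    simp only [ff, hfun]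
    rw [if_pos (by rw [hm3]; omega : i ≤ 3 * m₁ * m₂ / 3)]
  have hffB : ∀ i : ℕ, m₁ * m₂ < i → i ≤ 2 * (m₁ * m₂) →
      (ff (3 * m₁ * m₂) Lf ε i : EuclideanSpace ℝ (Fin d) → ℝ)
        = fun w => 300 * π * ε ^ 2 / ((3 * m₁ * m₂ : ℕ) * Lf) *
            phi ((Real.sqrt (3 * m₁ * m₂ : ℕ) * Lf / (150 * π * ε)) • w) 1 := by
    intro i hi1 hi2
    funext w
    simp only [ff, hfun]
    rw [if_neg (by rw [hm3]; omega : ¬ i ≤ 3 * m₁ * m₂ / 3),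
      if_pos (by rw [hm23]; omega : i ≤ 2 * (3 * m₁ * m₂) / 3)]
  have hffC : ∀ i : ℕ, 2 * (m₁ * m₂) < i →
      (ff (3 * m₁ * m₂) Lf ε i : EuclideanSpace ℝ (Fin d) → ℝ)
        = fun w => 300 * π * ε ^ 2 / ((3 * m₁ * m₂ : ℕ) * Lf) *
            (phi ((Real.sqrt (3 * m₁ * m₂ : ℕ) * Lf / (150 * π * ε)) • w) 1
              + 3 * ∑ j ∈ Finset.Icc 1 (d / 2),
                  phi ((Real.sqrt (3 * m₁ * m₂ : ℕ) * Lf / (150 * π * ε)) • w) (2 * j + 1)) := by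
    intro i hi
    funext w
    simp only [ff, hfun]
    rw [if_neg (by rw [hm3]; omega : ¬ i ≤ 3 * m₁ * m₂ / 3),
      if_neg (by rw [hm23]; omega : ¬ i ≤ 2 * (3 * m₁ * m₂) / 3)]
  have hgA : ∀ j ∈ Finset.Icc 1 (d / 2), 2 ≤ 2 * j := by
    intro j hj
    simp only [Finset.mem_Icc] at hj
    omega
  have hgC : ∀ j ∈ Finset.Icc 1 (d / 2), 2 ≤ 2 * j + 1 := by
    intro j hj
    simp only [Finset.mem_Icc] at hj
    omega
  refine ⟨?_, ?_, ?_⟩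
  · -- jb = 1
    intro hjb
    subst hjb
    constructor
    · ext j
      show z j = 0
      by_contra hne
      have := hz j hne
      omega
    · intro i hi1 hi2 k hknz
      rcases le_or_gt (k.val + 1) 1 with hle | hgt
      · exact hle
      · exfalso
        apply hknz
        have hk : ¬ k.val + 1 = 1 := by omega
        by_cases hA : i ≤ m₁ * m₂
        · rw [hffA i hA]
          apply Stmt10Aux.grad_zero_A _ _ _ _ hgA z k hk
          intro j hj
          simp only [Finset.mem_Icc] at hj
          exact Or.inl (hzcs _ _ (by omega))
        · by_cases hB : i ≤ 2 * (m₁ * m₂)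
          · rw [hffB i (by omega) hB]
            exact Stmt10Aux.grad_zero_B _ _ z k hk
          · rw [hffC i (by omega)]
            apply Stmt10Aux.grad_zero_A _ _ _ _ hgC z k hk
            intro j hj
            simp only [Finset.mem_Icc] at hj
            exact Or.inl (hzcs _ _ (by omega))
  · -- Even jb
    intro hjbe
    obtain ⟨r, hr⟩ := hjbe
    constructor
    · intro i hi1 hi2 k hknz
      rcases le_or_gt (k.val + 1) jb with hle | hgt
      · exact hle
      · exfalso
        apply hknz
        have hk : ¬ k.val + 1 = 1 := by omega
        rw [hffA i hi2]
        apply Stmt10Aux.grad_zero_A _ _ _ _ hgA z k hk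
        intro j hj
        simp only [Finset.mem_Icc] at hj
        by_cases hc : 2 * j = k.val + 1 ∨ 2 * j - 1 = k.val + 1
        · exact Or.inl (hzcs _ _ (by omega))
        · push_neg at hc
          exact Or.inr ⟨hc.2, hc.1⟩
    · intro i hi1 hi2 k hknz
      rcases le_or_gt (k.val + 1) (jb - 1) with hle | hgt
      · exact hle
      · exfalso
        apply hknz
        have hk : ¬ k.val + 1 = 1 := by omega
        by_cases hB : i ≤ 2 * (m₁ * m₂)
        · rw [hffB i hi1 hB]
          exact Stmt10Aux.grad_zero_B _ _ z k hk
        · rw [hffC i (by omega)]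
          apply Stmt10Aux.grad_zero_A _ _ _ _ hgC z k hk
          intro j hj
          simp only [Finset.mem_Icc] at hj
          by_cases hc : 2 * j + 1 = k.val + 1 ∨ 2 * j + 1 - 1 = k.val + 1
          · exact Or.inl (hzcs _ _ (by omega))
          · push_neg at hc
            exact Or.inr ⟨hc.2, hc.1⟩
  · -- Odd jb
    intro hjbo hjb1
    obtain ⟨r, hr⟩ := hjbo
    constructor
    · intro i hi1 hi2 k hknz
      rcases le_or_gt (k.val + 1) (jb - 1) with hle | hgt
      · exact hle
      · exfalso
        apply hknz
        have hk : ¬ k.val + 1 = 1 := by omega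
        by_cases hA : i ≤ m₁ * m₂
        · rw [hffA i hA]
          apply Stmt10Aux.grad_zero_A _ _ _ _ hgA z k hk
          intro j hj
          simp only [Finset.mem_Icc] at hj
          by_cases hc : 2 * j = k.val + 1 ∨ 2 * j - 1 = k.val + 1
          · exact Or.inl (hzcs _ _ (by omega))
          · push_neg at hc
            exact Or.inr ⟨hc.2, hc.1⟩
        · rw [hffB i (by omega) (by omega)]
          exact Stmt10Aux.grad_zero_B _ _ z k hk
    · intro i hi1 hi2 k hknz
      rcases le_or_gt (k.val + 1) jb with hle | hgt
      · exact hle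
      · exfalso
        apply hknz
        have hk : ¬ k.val + 1 = 1 := by omega
        rw [hffC i hi1]
        apply Stmt10Aux.grad_zero_A _ _ _ _ hgC z k hk
        intro j hj
        simp only [Finset.mem_Icc] at hj
        by_cases hc : 2 * j + 1 = k.val + 1 ∨ 2 * j + 1 - 1 = k.val + 1
        · exact Or.inl (hzcs _ _ (by omega))
        · push_neg at hc
          exact Or.inr ⟨hc.2, hc.1⟩


end
end

section
/- For any x₁, x₂ ∈ ℝ and any c > 0, the unique minimizer (z̃₁, z̃₂) of the function (z₁, z₂) ↦ (1/2)(z₁ − x₁)² + (1/2)(z₂ − x₂)² + c·|z₁ − z₂| over ℝ² is given by: (z̃₁, z̃₂) = ((x₁+x₂)/2, (x₁+x₂)/2) if |x₁ − x₂| ≤ 2c, and (z̃₁, z̃₂) = (x₁ − c·sign(x₁ − x₂), x₂ + c·sign(x₁ − x₂)) if |x₁ − x₂| > 2c. -/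
open Real Matrix Finset
open scoped Kronecker

noncomputable section

lemma prox_key (x₁ x₂ c s q₁ q₂ : ℝ) (hc : 0 < c) (hs : |s| ≤ 1)
    (hps : s * ((x₁ - c * s) - (x₂ + c * s)) = |(x₁ - c * s) - (x₂ + c * s)|) :
    1 / 2 * ((x₁ - c * s) - x₁) ^ 2 + 1 / 2 * ((x₂ + c * s) - x₂) ^ 2 +
      c * |(x₁ - c * s) - (x₂ + c * s)| +
      1 / 2 * ((q₁ - (x₁ - c * s)) ^ 2 + (q₂ - (x₂ + c * s)) ^ 2) ≤
    1 / 2 * (q₁ - x₁) ^ 2 + 1 / 2 * (q₂ - x₂) ^ 2 + c * |q₁ - q₂| := by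
  have h1 : s * (q₁ - q₂) ≤ |q₁ - q₂| := by
    calc s * (q₁ - q₂) ≤ |s * (q₁ - q₂)| := le_abs_self _
    _ = |s| * |q₁ - q₂| := abs_mul _ _
    _ ≤ 1 * |q₁ - q₂| := by
        exact mul_le_mul_of_nonneg_right hs (abs_nonneg _)
    _ = |q₁ - q₂| := one_mul _
  nlinarith [sq_nonneg (q₁ - (x₁ - c * s)), sq_nonneg (q₂ - (x₂ + c * s))]

/-- Closed form of the two-dimensional prox of c·|z₁ − z₂|. -/
theorem stmt_12 (x₁ x₂ c : ℝ) (hc : 0 < c) (p : ℝ × ℝ)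
    (hp : p = if |x₁ - x₂| ≤ 2 * c then ((x₁ + x₂) / 2, (x₁ + x₂) / 2)
      else (x₁ - c * Real.sign (x₁ - x₂), x₂ + c * Real.sign (x₁ - x₂))) :
    (∀ q : ℝ × ℝ,
      1 / 2 * (p.1 - x₁) ^ 2 + 1 / 2 * (p.2 - x₂) ^ 2 + c * |p.1 - p.2| ≤
        1 / 2 * (q.1 - x₁) ^ 2 + 1 / 2 * (q.2 - x₂) ^ 2 + c * |q.1 - q.2|) ∧
    ∀ q : ℝ × ℝ,
      (∀ r : ℝ × ℝ,
        1 / 2 * (q.1 - x₁) ^ 2 + 1 / 2 * (q.2 - x₂) ^ 2 + c * |q.1 - q.2| ≤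
          1 / 2 * (r.1 - x₁) ^ 2 + 1 / 2 * (r.2 - x₂) ^ 2 + c * |r.1 - r.2|) →
      q = p := by
  -- find s witnessing the optimality conditions
  obtain ⟨s, hs, hps, hp1, hp2⟩ : ∃ s : ℝ, |s| ≤ 1 ∧
      s * ((x₁ - c * s) - (x₂ + c * s)) = |(x₁ - c * s) - (x₂ + c * s)| ∧
      p.1 = x₁ - c * s ∧ p.2 = x₂ + c * s := by
    by_cases h : |x₁ - x₂| ≤ 2 * c
    · refine ⟨(x₁ - x₂) / (2 * c), ?_, ?_, ?_, ?_⟩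
      · have h2c : |2 * c| = 2 * c := abs_of_pos (by linarith)
        rw [abs_div, h2c, div_le_one (by linarith)]
        exact h
      · have : (x₁ - c * ((x₁ - x₂) / (2 * c))) - (x₂ + c * ((x₁ - x₂) / (2 * c))) = 0 := by
          field_simp; ring
        rw [this]; simp
      · simp [hp, h]; field_simp; ring
      · simp [hp, h]; field_simp; ring
    · have hne : x₁ ≠ x₂ := by
        intro he; apply h; rw [he]; simp; linarith
      refine ⟨Real.sign (x₁ - x₂), ?_, ?_, ?_, ?_⟩
      · rcases lt_or_gt_of_ne (sub_ne_zero.mpr hne) with hlt | hgt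
        · rw [Real.sign_of_neg hlt]; simp
        · rw [Real.sign_of_pos hgt]; simp
      · push_neg at h
        rcases lt_or_gt_of_ne (sub_ne_zero.mpr hne) with hlt | hgt
        · rw [Real.sign_of_neg hlt]
          rw [abs_of_neg hlt] at h
          have : (x₁ - c * (-1)) - (x₂ + c * (-1)) = (x₁ - x₂) + 2 * c := by ring
          rw [this, abs_of_neg (by linarith)]; ring
        · rw [Real.sign_of_pos hgt]
          rw [abs_of_pos hgt] at h
          have : (x₁ - c * 1) - (x₂ + c * 1) = (x₁ - x₂) - 2 * c := by ring
          rw [this, abs_of_pos (by linarith)]; ring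
      · simp [hp, h]
      · simp [hp, h]
  have key : ∀ q₁ q₂ : ℝ,
      1 / 2 * (p.1 - x₁) ^ 2 + 1 / 2 * (p.2 - x₂) ^ 2 + c * |p.1 - p.2| +
        1 / 2 * ((q₁ - p.1) ^ 2 + (q₂ - p.2) ^ 2) ≤
      1 / 2 * (q₁ - x₁) ^ 2 + 1 / 2 * (q₂ - x₂) ^ 2 + c * |q₁ - q₂| := by
    intro q₁ q₂
    rw [hp1, hp2]
    exact prox_key x₁ x₂ c s q₁ q₂ hc hs hps
  constructor
  · intro q
    have := key q.1 q.2
    nlinarith [sq_nonneg (q.1 - p.1), sq_nonneg (q.2 - p.2)]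
  · intro q hq
    have h1 := key q.1 q.2
    have h2 := hq p
    have hsum : (q.1 - p.1) ^ 2 + (q.2 - p.2) ^ 2 ≤ 0 := by linarith
    have h01 : (q.1 - p.1) ^ 2 = 0 :=
      le_antisymm (by nlinarith [sq_nonneg (q.2 - p.2)]) (sq_nonneg _)
    have h02 : (q.2 - p.2) ^ 2 = 0 :=
      le_antisymm (by nlinarith [sq_nonneg (q.1 - p.1)]) (sq_nonneg _)
    have e1 : q.1 = p.1 := by
      have := pow_eq_zero_iff (n := 2) (by norm_num) |>.mp h01
      linarith
    have e2 : q.2 = p.2 := by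
      have := pow_eq_zero_iff (n := 2) (by norm_num) |>.mp h02
      linarith
    exact Prod.ext e1 e2

end
end
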